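/- arXiv:1001.2789 — 4 statements merged into one kernel-verified Lean document; each statement's English description precedes it below -/
import Mathlib

section
/- Let 0 < p₀ < p₁ < ∞, let (Ω, μ) be a measure space, let (F_j)_{j∈ℤ} be measurable functions on Ω, let (s_j) be nonnegative reals, and let M > 0. Assume that for every j ∈ ℤ and for ν ∈ {0,1} one has ‖F_j‖_{p_ν}^{p_ν} ≤ 2^{j p_ν} M^{p_ν} s_j. Then for every p with p₀ < p < p₁ there is a constant C = C(p₀, p₁, p), independent of the F_j, s_j and M, such that ‖Σ_j F_j‖_p^p ≤ C^p M^p Σ_j 2^{jp} s_j. -/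
/-!
Write `G = ∑ⱼ ‖Fⱼ‖` and normalise `M = 1`. Up to a factor `2 ^ p`, `∫ G ^ p` is bounded by the
dyadic layer-cake sum `∑ₖ 2 ^ (k p) μ {G > 2 ^ k}`. At height `2 ^ k`, split `G` into the terms
with `j ≤ k` and those with `j ≥ k`, and bound the level set of the first part by Chebyshev in
`L ^ p₁` and that of the second in `L ^ p₀`. Inside each part, Hölder's inequality (or
`q`-subadditivity if `q ≤ 1`) with the geometric weights `2 ^ (-ε |k - j|)` bounds
`∫ (∑ⱼ ‖Fⱼ‖) ^ q` by `∑ⱼ 2 ^ (ε |k - j| |q - 1|) ∫ ‖Fⱼ‖ ^ q`. Since `q` lies on the far side of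
`p`, Chebyshev produces the factor `2 ^ ((k - j) (p - q)) = 2 ^ (-|k - j| |p - q|)`, which beats
the Hölder loss for small `ε`; the double sum over `k` and `j` then collapses to a multiple of
`∑ⱼ 2 ^ (j p) sⱼ`.
-/

open MeasureTheory
open scoped ENNReal

namespace ENNReal

variable {ι : Type*}

theorem rpow_sum_le_sum_rpow (s : Finset ι) (f : ι → ℝ≥0∞) {q : ℝ} (hq0 : 0 < q) (hq1 : q ≤ 1) :
    (∑ i ∈ s, f i) ^ q ≤ ∑ i ∈ s, f i ^ q := by
  classical
  induction s using Finset.induction_on with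
  | empty => simp [zero_rpow_of_pos hq0]
  | insert i s hi ih =>
    rw [Finset.sum_insert hi, Finset.sum_insert hi]
    exact (rpow_add_le_add_rpow _ _ hq0.le hq1).trans (add_le_add_right ih _)

theorem rpow_tsum_le_tsum_rpow (f : ι → ℝ≥0∞) {q : ℝ} (hq0 : 0 < q) (hq1 : q ≤ 1) :
    (∑' i, f i) ^ q ≤ ∑' i, f i ^ q := by
  rw [← le_rpow_inv_iff hq0, ENNReal.tsum_eq_iSup_sum]
  exact iSup_le fun s => (le_rpow_inv_iff hq0).2 <|
    (rpow_sum_le_sum_rpow s f hq0 hq1).trans (ENNReal.sum_le_tsum s)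

theorem inner_le_weight_mul_Lp_tsum (w f : ι → ℝ≥0∞) {q : ℝ} (hq : 1 ≤ q) :
    ∑' i, w i * f i ≤ (∑' i, w i) ^ (1 - q⁻¹) * (∑' i, w i * f i ^ q) ^ q⁻¹ := by
  rw [ENNReal.tsum_eq_iSup_sum (f := fun i => w i * f i)]
  refine iSup_le fun s => (inner_le_weight_mul_Lp_of_nonneg s hq w f).trans ?_
  gcongr
  · exact sub_nonneg.2 (inv_le_one_of_one_le₀ hq)
  · exact ENNReal.sum_le_tsum s
  · exact ENNReal.sum_le_tsum s

theorem rpow_tsum_le_weight_rpow_mul_tsum {w : ι → ℝ≥0∞} (hw0 : ∀ i, w i ≠ 0) (hw : ∀ i, w i ≠ ∞)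
    (f : ι → ℝ≥0∞) {q : ℝ} (hq : 1 ≤ q) :
    (∑' i, f i) ^ q ≤ (∑' i, w i) ^ (q - 1) * ∑' i, w i ^ (1 - q) * f i ^ q := by
  have hq0 : 0 < q := zero_lt_one.trans_le hq
  have hf : ∀ i, f i = w i * (f i / w i) := fun i => (ENNReal.mul_div_cancel (hw0 i) (hw i)).symm
  have hfq : ∀ i, w i * (f i / w i) ^ q = w i ^ (1 - q) * f i ^ q := fun i => by
    rw [div_rpow_of_nonneg _ _ hq0.le, rpow_sub _ _ (hw0 i) (hw i), rpow_one, div_eq_mul_inv,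
      div_eq_mul_inv]
    ring
  calc (∑' i, f i) ^ q = (∑' i, w i * (f i / w i)) ^ q := by simp only [← hf]
    _ ≤ ((∑' i, w i) ^ (1 - q⁻¹) * (∑' i, w i * (f i / w i) ^ q) ^ q⁻¹) ^ q := by
      gcongr; exact inner_le_weight_mul_Lp_tsum w _ hq
    _ = (∑' i, w i) ^ (q - 1) * ∑' i, w i ^ (1 - q) * f i ^ q := by
      rw [mul_rpow_of_nonneg _ _ hq0.le, ← rpow_mul, ← rpow_mul, inv_mul_cancel₀ hq0.ne', rpow_one,
        sub_mul, one_mul, inv_mul_cancel₀ hq0.ne', tsum_congr hfq]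

theorem rpow_tsum_le_one_add_tsum_rpow_mul_tsum {w : ι → ℝ≥0∞} (hw0 : ∀ i, w i ≠ 0)
    (hw1 : ∀ i, w i ≤ 1) (f : ι → ℝ≥0∞) {q : ℝ} (hq : 0 < q) :
    (∑' i, f i) ^ q ≤ (1 + ∑' i, w i) ^ q * ∑' i, w i ^ (-|q - 1|) * f i ^ q := by
  have h1 : 1 ≤ (1 + ∑' i, w i) ^ q := one_le_rpow le_self_add hq
  rcases le_total q 1 with hq1 | hq1
  · have hw : ∀ i, f i ^ q ≤ w i ^ (-|q - 1|) * f i ^ q := fun i =>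
      le_mul_of_one_le_left zero_le <| by
        simpa using rpow_le_rpow_of_exponent_ge (hw1 i) (neg_nonpos.2 (abs_nonneg (q - 1)))
    calc (∑' i, f i) ^ q ≤ ∑' i, w i ^ (-|q - 1|) * f i ^ q :=
          (rpow_tsum_le_tsum_rpow f hq hq1).trans (ENNReal.tsum_le_tsum hw)
      _ ≤ _ := le_mul_of_one_le_left zero_le h1
  · have hw : ∀ i, w i ≠ ∞ := fun i => ne_top_of_le_ne_top one_ne_top (hw1 i)
    rw [abs_of_nonneg (sub_nonneg.2 hq1), neg_sub]
    refine (rpow_tsum_le_weight_rpow_mul_tsum hw0 hw f hq1).trans ?_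
    gcongr
    calc (∑' i, w i) ^ (q - 1) ≤ (1 + ∑' i, w i) ^ (q - 1) :=
          rpow_le_rpow le_add_self (sub_nonneg.2 hq1)
      _ ≤ (1 + ∑' i, w i) ^ q := rpow_le_rpow_of_exponent_le le_self_add (by linarith)

theorem two_rpow_ne_top (x : ℝ) : (2 : ℝ≥0∞) ^ x ≠ ∞ := by simp [rpow_eq_top_iff]

theorem two_rpow_ne_zero (x : ℝ) : (2 : ℝ≥0∞) ^ x ≠ 0 := by simp [rpow_eq_zero_iff]

theorem two_rpow_sub_one_add_two_rpow_sub_one (x : ℝ) :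
    (2 : ℝ≥0∞) ^ (x - 1) + 2 ^ (x - 1) = 2 ^ x := by
  conv_rhs => rw [← sub_add_cancel x 1, rpow_add _ _ two_ne_zero ofNat_ne_top, rpow_one, mul_two]

theorem rpow_le_two_rpow_mul_tsum_ite (g : ℝ≥0∞) {p : ℝ} (hp : 0 < p) :
    g ^ p ≤
      2 ^ p * ∑' k : ℤ, if (2 : ℝ≥0∞) ^ (k : ℝ) < g then (2 : ℝ≥0∞) ^ ((k : ℝ) * p) else 0 := by
  rcases eq_or_ne g 0 with rfl | hg0
  · simp [zero_rpow_of_pos hp]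
  rcases eq_or_ne g ∞ with rfl | hg
  · have hinf : ∑' n : ℕ, (1 : ℝ≥0∞) ≤ ∑' k : ℤ, (2 : ℝ≥0∞) ^ ((k : ℝ) * p) :=
      (ENNReal.tsum_le_tsum fun n : ℕ => by
        simpa using rpow_le_rpow_of_exponent_le one_le_two (by positivity : (0 : ℝ) ≤ n * p)).trans
        (tsum_comp_le_tsum_of_injective Nat.cast_injective _)
    have hlt : ∀ x : ℝ, (2 : ℝ≥0∞) ^ x < ∞ := fun x => (two_rpow_ne_top x).lt_top
    rw [ENNReal.tsum_const_eq_top_of_ne_zero one_ne_zero, top_le_iff] at hinf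
    simp only [hlt, if_true, hinf, mul_top (two_rpow_ne_zero p), le_top]
  obtain ⟨n, hgn, hng⟩ := exists_mem_Ioc_zpow hg0 hg one_lt_two ofNat_ne_top
  calc g ^ p ≤ ((2 : ℝ≥0∞) ^ ((n : ℝ) + 1)) ^ p := by
        gcongr; rwa [← Int.cast_one, ← Int.cast_add, rpow_intCast]
    _ = 2 ^ p * 2 ^ ((n : ℝ) * p) := by
        rw [← rpow_mul, add_mul, one_mul, add_comm, rpow_add _ _ two_ne_zero ofNat_ne_top]
    _ ≤ _ := by
        gcongr
        refine le_trans (le_of_eq ?_) (ENNReal.le_tsum n)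
        rw [if_pos (by rwa [rpow_intCast])]

theorem tsum_two_rpow_neg_mul_abs_ne_top {ε : ℝ} (hε : 0 < ε) :
    ∑' d : ℤ, (2 : ℝ≥0∞) ^ (-ε * |(d : ℝ)|) ≠ ∞ := by
  have hgeom : ∀ (x : ℝ) (n : ℕ), (n : ℝ) ≤ x →
      (2 : ℝ≥0∞) ^ (-ε * x) ≤ ((2 : ℝ≥0∞) ^ (-ε)) ^ n := fun x n hn => by
    rw [← rpow_natCast, ← rpow_mul]
    exact rpow_le_rpow_of_exponent_le one_le_two (by nlinarith)
  have hr : (2 : ℝ≥0∞) ^ (-ε) < 1 := rpow_lt_one_of_one_lt_of_neg one_lt_two (neg_lt_zero.2 hε)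
  rw [tsum_of_nat_of_neg_add_one ENNReal.summable ENNReal.summable]
  refine add_ne_top.2 ⟨ne_top_of_le_ne_top ?_ (ENNReal.tsum_le_tsum fun n => hgeom _ n ?_),
    ne_top_of_le_ne_top ?_ (ENNReal.tsum_le_tsum fun n => hgeom _ n ?_)⟩
  · rw [tsum_geometric]; exact inv_ne_top.2 (tsub_pos_of_lt hr).ne'
  · simp
  · rw [tsum_geometric]; exact inv_ne_top.2 (tsub_pos_of_lt hr).ne'
  · rw [Int.cast_neg, abs_neg, Int.cast_add, Int.cast_natCast, Int.cast_one,
      abs_of_nonneg (by positivity)]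
    linarith

theorem tsum_le_tsum_ite_add_tsum_ite (f : ι → ℝ≥0∞) {P Q : ι → Prop}
    [DecidablePred P] [DecidablePred Q] (h : ∀ i, P i ∨ Q i) :
    ∑' i, f i ≤ (∑' i, if P i then f i else 0) + ∑' i, if Q i then f i else 0 := by
  rw [← ENNReal.tsum_add]
  refine ENNReal.tsum_le_tsum fun i => ?_
  rcases h i with hP | hQ
  · simp only [if_pos hP]; exact le_self_add
  · simp only [if_pos hQ]; exact le_add_self

theorem two_rpow_mul_two_rpow_mul_rpow_mul_le {p q ε k j : ℝ} (hkj : (k - j) * (p - q) ≤ 0)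
    {I s : ℝ≥0∞} (hI : I ≤ 2 ^ (j * q) * s) :
    2 ^ (k * p) * 2 ^ ((k - 1) * -q) * (((2 : ℝ≥0∞) ^ (-ε * |k - j|)) ^ (-|q - 1|) * I) ≤
      2 ^ q * ((2 : ℝ≥0∞) ^ (-(|p - q| - ε * |q - 1|) * |k - j|) * (2 ^ (j * p) * s)) := by
  have hsign : (k - j) * (p - q) = -(|k - j| * |p - q|) := by
    rw [← abs_mul, abs_of_nonpos hkj, neg_neg]
  calc _ ≤ 2 ^ (k * p) * 2 ^ ((k - 1) * -q) *
        (((2 : ℝ≥0∞) ^ (-ε * |k - j|)) ^ (-|q - 1|) * (2 ^ (j * q) * s)) := by gcongr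
    _ = 2 ^ (k * p + (k - 1) * -q + -ε * |k - j| * -|q - 1| + j * q) * s := by
        simp only [rpow_add _ _ two_ne_zero ofNat_ne_top, rpow_mul 2 (-ε * |k - j|)]; ring
    _ = 2 ^ (q + -(|p - q| - ε * |q - 1|) * |k - j| + j * p) * s := by
        congr 2; linear_combination hsign
    _ = _ := by simp only [rpow_add _ _ two_ne_zero ofNat_ne_top]; ring

theorem tsum_two_rpow_mul_abs_sub (c : ℝ) (j : ℤ) :
    ∑' k : ℤ, (2 : ℝ≥0∞) ^ (c * |(k : ℝ) - j|) = ∑' d : ℤ, (2 : ℝ≥0∞) ^ (c * |(d : ℝ)|) := by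
  simpa using (Equiv.subRight j).tsum_eq fun d : ℤ => (2 : ℝ≥0∞) ^ (c * |(d : ℝ)|)

end ENNReal

section Measure

variable {Ω : Type*} [MeasurableSpace Ω] {μ : Measure Ω}

theorem measure_lt_le_rpow_neg_mul_lintegral {g : Ω → ℝ≥0∞} (hg : AEMeasurable g μ) {c : ℝ≥0∞}
    (hc0 : c ≠ 0) (hc : c ≠ ∞) {q : ℝ} (hq : 0 < q) :
    μ {x | c < g x} ≤ c ^ (-q) * ∫⁻ x, g x ^ q ∂μ := by
  calc μ {x | c < g x} ≤ μ {x | c ^ q ≤ g x ^ q} :=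
        measure_mono fun x hx => ENNReal.rpow_le_rpow (le_of_lt hx) hq.le
    _ ≤ (∫⁻ x, g x ^ q ∂μ) / c ^ q := meas_ge_le_lintegral_div (hg.pow_const q)
        (ENNReal.rpow_pos (pos_iff_ne_zero.2 hc0) hc).ne' (ENNReal.rpow_ne_top_of_nonneg hq.le hc)
    _ = c ^ (-q) * ∫⁻ x, g x ^ q ∂μ := by rw [ENNReal.rpow_neg, div_eq_mul_inv, mul_comm]

theorem measure_lt_le_add_of_le_add {f g h : Ω → ℝ≥0∞} (hfgh : ∀ x, f x ≤ g x + h x)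
    {a b c : ℝ≥0∞} (habc : a + b ≤ c) :
    μ {x | c < f x} ≤ μ {x | a < g x} + μ {x | b < h x} := by
  refine (measure_mono fun x hx => ?_).trans (measure_union_le _ _)
  by_contra hab
  simp only [Set.mem_union, Set.mem_ofPred_eq, not_or, not_lt] at hx hab
  exact (hfgh x |>.trans (add_le_add hab.1 hab.2) |>.trans habc).not_gt hx

theorem lintegral_rpow_le_two_rpow_mul_tsum_measure {g : Ω → ℝ≥0∞} (hg : AEMeasurable g μ) {p : ℝ}
    (hp : 0 < p) :
    ∫⁻ x, g x ^ p ∂μ ≤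
      2 ^ p * ∑' k : ℤ, (2 : ℝ≥0∞) ^ ((k : ℝ) * p) * μ {x | (2 : ℝ≥0∞) ^ (k : ℝ) < g x} := by
  have hset : ∀ k : ℤ, NullMeasurableSet {x | (2 : ℝ≥0∞) ^ (k : ℝ) < g x} μ :=
    fun k => nullMeasurableSet_lt aemeasurable_const hg
  have hind : ∀ k : ℤ, ∀ x, (if (2 : ℝ≥0∞) ^ (k : ℝ) < g x then (2 : ℝ≥0∞) ^ ((k : ℝ) * p) else 0)
      = {x | (2 : ℝ≥0∞) ^ (k : ℝ) < g x}.indicator (fun _ => (2 : ℝ≥0∞) ^ ((k : ℝ) * p)) x :=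
    fun k x => by simp [Set.indicator_apply]
  calc ∫⁻ x, g x ^ p ∂μ ≤ ∫⁻ x, 2 ^ p * ∑' k : ℤ,
        {x | (2 : ℝ≥0∞) ^ (k : ℝ) < g x}.indicator (fun _ => (2 : ℝ≥0∞) ^ ((k : ℝ) * p)) x ∂μ :=
        lintegral_mono fun x => by
          simpa only [hind] using ENNReal.rpow_le_two_rpow_mul_tsum_ite (g x) hp
    _ = _ := by
        rw [lintegral_const_mul'' _ (AEMeasurable.tsum fun k =>
            aemeasurable_const.indicator₀ (hset k)),
          lintegral_tsum fun k => aemeasurable_const.indicator₀ (hset k)]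
        simp_rw [lintegral_indicator_const₀ (hset _)]

theorem lintegral_rpow_tsum_le_one_add_tsum_rpow_mul_tsum {ι : Type*} [Countable ι]
    {w : ι → ℝ≥0∞} (hw0 : ∀ i, w i ≠ 0) (hw1 : ∀ i, w i ≤ 1) {f : ι → Ω → ℝ≥0∞}
    (hf : ∀ i, AEMeasurable (f i) μ) {q : ℝ} (hq : 0 < q) :
    ∫⁻ x, (∑' i, f i x) ^ q ∂μ ≤
      (1 + ∑' i, w i) ^ q * ∑' i, w i ^ (-|q - 1|) * ∫⁻ x, f i x ^ q ∂μ := by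
  have hmeas : ∀ i, AEMeasurable (fun x => w i ^ (-|q - 1|) * f i x ^ q) μ :=
    fun i => ((hf i).pow_const q).const_mul _
  calc ∫⁻ x, (∑' i, f i x) ^ q ∂μ ≤
        ∫⁻ x, (1 + ∑' i, w i) ^ q * ∑' i, w i ^ (-|q - 1|) * f i x ^ q ∂μ :=
        lintegral_mono fun x => ENNReal.rpow_tsum_le_one_add_tsum_rpow_mul_tsum hw0 hw1 _ hq
    _ = _ := by
        rw [lintegral_const_mul'' _ (AEMeasurable.tsum hmeas), lintegral_tsum hmeas]
        simp_rw [lintegral_const_mul'' _ ((hf _).pow_const q)]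

theorem eLpNorm_ofReal_rpow_eq_lintegral {E : Type*} [ENorm E] (f : Ω → E) {q : ℝ} (hq : 0 < q) :
    eLpNorm f (ENNReal.ofReal q) μ ^ q = ∫⁻ x, ‖f x‖ₑ ^ q ∂μ := by
  rw [eLpNorm_eq_eLpNorm' (by simpa using hq) ENNReal.ofReal_ne_top, ENNReal.toReal_ofReal hq.le,
    lintegral_rpow_enorm_eq_rpow_eLpNorm' hq]

-- `(k - j) * (p - q) ≤ 0` selects `j ≤ k` if `p < q` and `j ≥ k` if `q < p`: the side on which
-- Chebyshev in `L ^ q` gains the factor `2 ^ (-|k - j| |p - q|)`.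
theorem two_rpow_mul_measure_lt_tsum_ite_le {p q ε : ℝ} (hq : 0 < q) (hε : 0 ≤ ε)
    {a : ℤ → Ω → ℝ≥0∞} (ha : ∀ j, AEMeasurable (a j) μ) {σ : ℤ → ℝ≥0∞}
    (hσ : ∀ j : ℤ, ∫⁻ x, a j x ^ q ∂μ ≤ 2 ^ ((j : ℝ) * q) * σ j) (k : ℤ) :
    (2 : ℝ≥0∞) ^ ((k : ℝ) * p) * μ {x | (2 : ℝ≥0∞) ^ ((k : ℝ) - 1) <
        ∑' j : ℤ, if ((k : ℝ) - j) * (p - q) ≤ 0 then a j x else 0} ≤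
      2 ^ q * (1 + ∑' d : ℤ, (2 : ℝ≥0∞) ^ (-ε * |(d : ℝ)|)) ^ q *
        ∑' j : ℤ, 2 ^ (-(|p - q| - ε * |q - 1|) * |(k : ℝ) - j|) * (2 ^ ((j : ℝ) * p) * σ j) := by
  set f : ℤ → Ω → ℝ≥0∞ := fun j x => if ((k : ℝ) - j) * (p - q) ≤ 0 then a j x else 0
  set w : ℤ → ℝ≥0∞ := fun j => 2 ^ (-ε * |(k : ℝ) - j|)
  have hf : ∀ j, AEMeasurable (f j) μ := fun j => by
    by_cases h : ((k : ℝ) - j) * (p - q) ≤ 0 <;> simp [f, h, ha j]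
  have hw1 : ∀ j, w j ≤ 1 := fun j => by
    simpa [w] using ENNReal.rpow_le_rpow_of_exponent_le one_le_two
      (mul_nonpos_of_nonpos_of_nonneg (neg_nonpos.2 hε) (abs_nonneg ((k : ℝ) - j)))
  have hw : ∑' j, w j = ∑' d : ℤ, (2 : ℝ≥0∞) ^ (-ε * |(d : ℝ)|) := by
    simp_rw [w, abs_sub_comm (k : ℝ)]; exact ENNReal.tsum_two_rpow_mul_abs_sub _ k
  have hterm : ∀ j : ℤ, 2 ^ ((k : ℝ) * p) * 2 ^ (((k : ℝ) - 1) * -q) *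
      (w j ^ (-|q - 1|) * ∫⁻ x, f j x ^ q ∂μ) ≤
      2 ^ q * (2 ^ (-(|p - q| - ε * |q - 1|) * |(k : ℝ) - j|) * (2 ^ ((j : ℝ) * p) * σ j)) :=
    fun j => by
      by_cases h : ((k : ℝ) - j) * (p - q) ≤ 0
      · exact ENNReal.two_rpow_mul_two_rpow_mul_rpow_mul_le h (by simpa [f, h] using hσ j)
      · simp [f, h, ENNReal.zero_rpow_of_pos hq]
  calc _ ≤ 2 ^ ((k : ℝ) * p) * (((2 : ℝ≥0∞) ^ ((k : ℝ) - 1)) ^ (-q) *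
        ∫⁻ x, (∑' j, f j x) ^ q ∂μ) := by
        gcongr
        exact measure_lt_le_rpow_neg_mul_lintegral (AEMeasurable.tsum hf)
          (ENNReal.two_rpow_ne_zero _) (ENNReal.two_rpow_ne_top _) hq
    _ ≤ 2 ^ ((k : ℝ) * p) * (((2 : ℝ≥0∞) ^ ((k : ℝ) - 1)) ^ (-q) * ((1 + ∑' j, w j) ^ q *
        ∑' j, w j ^ (-|q - 1|) * ∫⁻ x, f j x ^ q ∂μ)) := by
        gcongr
        exact lintegral_rpow_tsum_le_one_add_tsum_rpow_mul_tsum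
          (fun j => ENNReal.two_rpow_ne_zero _) hw1 hf hq
    _ = (1 + ∑' j, w j) ^ q * ∑' j, 2 ^ ((k : ℝ) * p) * 2 ^ (((k : ℝ) - 1) * -q) *
        (w j ^ (-|q - 1|) * ∫⁻ x, f j x ^ q ∂μ) := by
        rw [ENNReal.tsum_mul_left, ← ENNReal.rpow_mul]; ring
    _ ≤ (1 + ∑' j, w j) ^ q * ∑' j : ℤ,
        2 ^ q * (2 ^ (-(|p - q| - ε * |q - 1|) * |(k : ℝ) - j|) * (2 ^ ((j : ℝ) * p) * σ j)) :=
        mul_le_mul' le_rfl (ENNReal.tsum_le_tsum hterm)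
    _ = _ := by rw [ENNReal.tsum_mul_left, hw]; ring

end Measure

theorem exists_tsum_two_rpow_mul_measure_lt_tsum_ite_le {p q : ℝ} (hq : 0 < q) (hpq : p ≠ q) :
    ∃ K : ℝ≥0∞, K ≠ ∞ ∧ ∀ {Ω : Type*} [MeasurableSpace Ω] (μ : Measure Ω) (a : ℤ → Ω → ℝ≥0∞)
      (σ : ℤ → ℝ≥0∞), (∀ j, AEMeasurable (a j) μ) →
      (∀ j : ℤ, ∫⁻ x, a j x ^ q ∂μ ≤ 2 ^ ((j : ℝ) * q) * σ j) →
      ∑' k : ℤ, (2 : ℝ≥0∞) ^ ((k : ℝ) * p) * μ {x | (2 : ℝ≥0∞) ^ ((k : ℝ) - 1) <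
          ∑' j : ℤ, if ((k : ℝ) - j) * (p - q) ≤ 0 then a j x else 0}
        ≤ K * ∑' j : ℤ, 2 ^ ((j : ℝ) * p) * σ j := by
  set ε := |p - q| / (q + 1)
  set δ := |p - q| - ε * |q - 1|
  have hε : 0 < ε := div_pos (abs_pos.2 (sub_ne_zero.2 hpq)) (by linarith)
  have hδ : 0 < δ := by
    have h1 : ε * |q - 1| < ε * (q + 1) :=
      mul_lt_mul_of_pos_left (abs_lt.2 ⟨by linarith, by linarith⟩) hε
    have h2 : ε * (q + 1) = |p - q| := div_mul_cancel₀ _ (by linarith)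
    linarith
  have hZε := ENNReal.tsum_two_rpow_neg_mul_abs_ne_top hε
  have hZδ := ENNReal.tsum_two_rpow_neg_mul_abs_ne_top hδ
  refine ⟨2 ^ q * (1 + ∑' d : ℤ, (2 : ℝ≥0∞) ^ (-ε * |(d : ℝ)|)) ^ q *
    ∑' d : ℤ, (2 : ℝ≥0∞) ^ (-δ * |(d : ℝ)|), by finiteness, ?_⟩
  intro Ω _ μ a σ ha hσ
  calc _ ≤ ∑' k : ℤ, 2 ^ q * (1 + ∑' d : ℤ, (2 : ℝ≥0∞) ^ (-ε * |(d : ℝ)|)) ^ q *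
        ∑' j : ℤ, 2 ^ (-δ * |(k : ℝ) - j|) * (2 ^ ((j : ℝ) * p) * σ j) :=
        ENNReal.tsum_le_tsum (two_rpow_mul_measure_lt_tsum_ite_le hq hε.le ha hσ)
    _ = 2 ^ q * (1 + ∑' d : ℤ, (2 : ℝ≥0∞) ^ (-ε * |(d : ℝ)|)) ^ q *
        ∑' j : ℤ, (∑' k : ℤ, (2 : ℝ≥0∞) ^ (-δ * |(k : ℝ) - j|)) * (2 ^ ((j : ℝ) * p) * σ j) := by
        rw [ENNReal.tsum_mul_left, ENNReal.tsum_comm]; simp_rw [ENNReal.tsum_mul_right]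
    _ = _ := by simp_rw [ENNReal.tsum_two_rpow_mul_abs_sub]; rw [ENNReal.tsum_mul_left]; ring

theorem exists_lintegral_rpow_tsum_le {p₀ p₁ p : ℝ} (h0 : 0 < p₀) (hp0 : p₀ < p) (hp1 : p < p₁) :
    ∃ K : ℝ≥0∞, K ≠ ∞ ∧ ∀ {Ω : Type*} [MeasurableSpace Ω] (μ : Measure Ω) (a : ℤ → Ω → ℝ≥0∞)
      (σ : ℤ → ℝ≥0∞), (∀ j, AEMeasurable (a j) μ) →
      (∀ j : ℤ, ∫⁻ x, a j x ^ p₀ ∂μ ≤ 2 ^ ((j : ℝ) * p₀) * σ j) →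
      (∀ j : ℤ, ∫⁻ x, a j x ^ p₁ ∂μ ≤ 2 ^ ((j : ℝ) * p₁) * σ j) →
      ∫⁻ x, (∑' j, a j x) ^ p ∂μ ≤ K * ∑' j : ℤ, 2 ^ ((j : ℝ) * p) * σ j := by
  have hp : 0 < p := h0.trans hp0
  obtain ⟨K₀, hK₀, hhigh⟩ :=
    exists_tsum_two_rpow_mul_measure_lt_tsum_ite_le (p := p) h0 hp0.ne'
  obtain ⟨K₁, hK₁, hlow⟩ :=
    exists_tsum_two_rpow_mul_measure_lt_tsum_ite_le (p := p) (hp.trans hp1) hp1.ne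
  refine ⟨2 ^ p * (K₀ + K₁), by finiteness, ?_⟩
  intro Ω _ μ a σ ha h₀ h₁
  have hsplit : ∀ k : ℤ, μ {x | (2 : ℝ≥0∞) ^ (k : ℝ) < ∑' j, a j x} ≤
      μ {x | (2 : ℝ≥0∞) ^ ((k : ℝ) - 1) <
        ∑' j : ℤ, if ((k : ℝ) - j) * (p - p₀) ≤ 0 then a j x else 0} +
      μ {x | (2 : ℝ≥0∞) ^ ((k : ℝ) - 1) <
        ∑' j : ℤ, if ((k : ℝ) - j) * (p - p₁) ≤ 0 then a j x else 0} := fun k =>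
    measure_lt_le_add_of_le_add
      (fun x => ENNReal.tsum_le_tsum_ite_add_tsum_ite _ fun j => by
        rcases le_total ((k : ℝ) - j) 0 with hkj | hkj
        · exact Or.inl (mul_nonpos_of_nonpos_of_nonneg hkj (by linarith))
        · exact Or.inr (mul_nonpos_of_nonneg_of_nonpos hkj (by linarith)))
      (ENNReal.two_rpow_sub_one_add_two_rpow_sub_one _).le
  calc ∫⁻ x, (∑' j, a j x) ^ p ∂μ ≤ 2 ^ p * ∑' k : ℤ,
        (2 : ℝ≥0∞) ^ ((k : ℝ) * p) * μ {x | (2 : ℝ≥0∞) ^ (k : ℝ) < ∑' j, a j x} :=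
        lintegral_rpow_le_two_rpow_mul_tsum_measure (AEMeasurable.tsum ha) hp
    _ ≤ 2 ^ p * ((∑' k : ℤ, (2 : ℝ≥0∞) ^ ((k : ℝ) * p) * μ {x | (2 : ℝ≥0∞) ^ ((k : ℝ) - 1) <
          ∑' j : ℤ, if ((k : ℝ) - j) * (p - p₀) ≤ 0 then a j x else 0}) +
        ∑' k : ℤ, (2 : ℝ≥0∞) ^ ((k : ℝ) * p) * μ {x | (2 : ℝ≥0∞) ^ ((k : ℝ) - 1) <
          ∑' j : ℤ, if ((k : ℝ) - j) * (p - p₁) ≤ 0 then a j x else 0}) := by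
        rw [← ENNReal.tsum_add]
        gcongr with k
        rw [← mul_add]
        exact mul_le_mul' le_rfl (hsplit k)
    _ ≤ 2 ^ p * (K₀ * ∑' j : ℤ, 2 ^ ((j : ℝ) * p) * σ j +
          K₁ * ∑' j : ℤ, 2 ^ ((j : ℝ) * p) * σ j) := by
        gcongr; exacts [hhigh μ a σ ha h₀, hlow μ a σ ha h₁]
    _ = _ := by ring

theorem exists_lintegral_rpow_tsum_le_mul_rpow {p₀ p₁ p : ℝ} (h0 : 0 < p₀) (hp0 : p₀ < p)
    (hp1 : p < p₁) :
    ∃ K : ℝ≥0∞, K ≠ ∞ ∧ ∀ {Ω : Type*} [MeasurableSpace Ω] (μ : Measure Ω) (a : ℤ → Ω → ℝ≥0∞)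
      (σ : ℤ → ℝ≥0∞) (m : ℝ≥0∞), m ≠ 0 → m ≠ ∞ → (∀ j, AEMeasurable (a j) μ) →
      (∀ j : ℤ, ∫⁻ x, a j x ^ p₀ ∂μ ≤ 2 ^ ((j : ℝ) * p₀) * m ^ p₀ * σ j) →
      (∀ j : ℤ, ∫⁻ x, a j x ^ p₁ ∂μ ≤ 2 ^ ((j : ℝ) * p₁) * m ^ p₁ * σ j) →
      ∫⁻ x, (∑' j, a j x) ^ p ∂μ ≤ K * m ^ p * ∑' j : ℤ, 2 ^ ((j : ℝ) * p) * σ j := by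
  obtain ⟨K, hK, hmain⟩ := exists_lintegral_rpow_tsum_le h0 hp0 hp1
  refine ⟨K, hK, ?_⟩
  intro Ω _ μ a σ m hm0 hm ha h₀ h₁
  have hp : 0 < p := h0.trans hp0
  have hscaled : ∀ {q : ℝ}, 0 < q →
      (∀ j : ℤ, ∫⁻ x, a j x ^ q ∂μ ≤ 2 ^ ((j : ℝ) * q) * m ^ q * σ j) →
      ∀ j : ℤ, ∫⁻ x, (a j x / m) ^ q ∂μ ≤ 2 ^ ((j : ℝ) * q) * σ j := by
    intro q hq hj j
    have hmq0 : m ^ q ≠ 0 := (ENNReal.rpow_pos (pos_iff_ne_zero.2 hm0) hm).ne'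
    have hmq : m ^ q ≠ ∞ := ENNReal.rpow_ne_top_of_nonneg hq.le hm
    calc ∫⁻ x, (a j x / m) ^ q ∂μ = (∫⁻ x, a j x ^ q ∂μ) / m ^ q := by
          simp_rw [ENNReal.div_rpow_of_nonneg _ _ hq.le, div_eq_mul_inv]
          exact lintegral_mul_const'' _ ((ha j).pow_const q)
      _ ≤ 2 ^ ((j : ℝ) * q) * m ^ q * σ j / m ^ q := by gcongr; exact hj j
      _ = 2 ^ ((j : ℝ) * q) * σ j := by rw [mul_right_comm, ENNReal.mul_div_cancel_right hmq0 hmq]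
  have hsum : ∀ x, ∑' j, a j x = m * ∑' j, a j x / m := fun x => by
    rw [← ENNReal.tsum_mul_left]; simp_rw [ENNReal.mul_div_cancel hm0 hm]
  calc ∫⁻ x, (∑' j, a j x) ^ p ∂μ = m ^ p * ∫⁻ x, (∑' j, a j x / m) ^ p ∂μ := by
        simp_rw [hsum, ENNReal.mul_rpow_of_nonneg _ _ hp.le]
        exact lintegral_const_mul'' _ ((AEMeasurable.tsum fun j => (ha j).div_const m).pow_const p)
    _ ≤ m ^ p * (K * ∑' j : ℤ, 2 ^ ((j : ℝ) * p) * σ j) := by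
        gcongr
        exact hmain μ (fun j x => a j x / m) σ (fun j => (ha j).div_const m) (hscaled h0 h₀)
          (hscaled (hp.trans hp1) h₁)
    _ = _ := by ring

theorem dyadic_interpolation_general (p₀ p₁ p : ℝ) (h0 : 0 < p₀)
    (hp0 : p₀ < p) (hp1 : p < p₁) :
    ∃ C : ℝ, 0 < C ∧
      ∀ (Ω : Type) (_ : MeasurableSpace Ω) (μ : Measure Ω) (F : ℤ → Ω → ℂ)
        (s : ℤ → ℝ) (M : ℝ),
        (∀ j, AEMeasurable (F j) μ) → (∀ j, 0 ≤ s j) → 0 < M →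
        (∀ j : ℤ, ∀ q ∈ ({p₀, p₁} : Set ℝ),
          eLpNorm (F j) (ENNReal.ofReal q) μ ^ q ≤
            ENNReal.ofReal ((2:ℝ) ^ ((j:ℝ) * q) * M ^ q * s j)) →
        eLpNorm (fun x => ∑' j : ℤ, F j x) (ENNReal.ofReal p) μ ^ p ≤
          ENNReal.ofReal (C ^ p * M ^ p) * ∑' j : ℤ, ENNReal.ofReal ((2:ℝ) ^ ((j:ℝ) * p) * s j) := by
  have hp : 0 < p := h0.trans hp0
  obtain ⟨K, hK, hmain⟩ := exists_lintegral_rpow_tsum_le_mul_rpow h0 hp0 hp1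
  have hK1 : 0 < (K + 1).toReal := ENNReal.toReal_pos (by simp) (by finiteness)
  refine ⟨(K + 1).toReal ^ p⁻¹, by positivity, ?_⟩
  intro Ω _ μ F s M hF hs hM hFs
  have hofReal : ∀ (x : ℝ) {y : ℝ}, 0 < x → ENNReal.ofReal (x ^ y) = ENNReal.ofReal x ^ y :=
    fun x y hx => (ENNReal.ofReal_rpow_of_pos hx).symm
  have hterm : ∀ j : ℤ, ENNReal.ofReal ((2:ℝ) ^ ((j:ℝ) * p) * s j) =
      2 ^ ((j:ℝ) * p) * ENNReal.ofReal (s j) := fun j => by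
    rw [ENNReal.ofReal_mul (by positivity), hofReal 2 two_pos, ENNReal.ofReal_ofNat]
  have hyp : ∀ q ∈ ({p₀, p₁} : Set ℝ), ∀ j : ℤ, ∫⁻ x, ‖F j x‖ₑ ^ q ∂μ ≤
      2 ^ ((j:ℝ) * q) * ENNReal.ofReal M ^ q * ENNReal.ofReal (s j) := fun q hq j => by
    have hq0 : 0 < q := by rcases hq with rfl | rfl <;> linarith
    rw [← eLpNorm_ofReal_rpow_eq_lintegral _ hq0, ← hofReal M hM, ← ENNReal.ofReal_ofNat 2,
      ← hofReal 2 two_pos, ← ENNReal.ofReal_mul (by positivity),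
      ← ENNReal.ofReal_mul (by positivity)]
    exact hFs j q hq
  calc eLpNorm (fun x => ∑' j : ℤ, F j x) (ENNReal.ofReal p) μ ^ p
      ≤ ∫⁻ x, (∑' j, ‖F j x‖ₑ) ^ p ∂μ := by
        rw [eLpNorm_ofReal_rpow_eq_lintegral _ hp]
        gcongr
        exact enorm_tsum_le_tsum_enorm
    _ ≤ K * ENNReal.ofReal M ^ p * ∑' j : ℤ, 2 ^ ((j : ℝ) * p) * ENNReal.ofReal (s j) :=
        hmain μ _ _ _ (ENNReal.ofReal_pos.2 hM).ne' ENNReal.ofReal_ne_top (fun j => (hF j).enorm)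
          (hyp p₀ (by simp)) (hyp p₁ (by simp))
    _ ≤ _ := by
        rw [ENNReal.ofReal_mul (by positivity), ← Real.rpow_mul hK1.le, inv_mul_cancel₀ hp.ne',
          Real.rpow_one, ENNReal.ofReal_toReal (by finiteness), hofReal M hM, tsum_congr hterm]
        gcongr
        exact le_self_add

/-- Dyadic interpolation lemma: if `‖F_j‖_{p_ν}^{p_ν} ≤ 2^{j p_ν} M^{p_ν} s_j` for `ν = 0, 1`,
then for `p₀ < p < p₁` one has `‖Σ_j F_j‖_p^p ≤ C^p M^p Σ_j 2^{jp} s_j`, with `C = C(p₀,p₁,p)`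
independent of the measure space, the `F_j`, the `s_j` and `M`. -/
theorem dyadic_interpolation (p₀ p₁ p : ℝ) (h0 : 0 < p₀) (h01 : p₀ < p₁)
    (hp0 : p₀ < p) (hp1 : p < p₁) :
    ∃ C : ℝ, 0 < C ∧
      ∀ (Ω : Type) (_ : MeasurableSpace Ω) (μ : Measure Ω) (F : ℤ → Ω → ℂ)
        (s : ℤ → ℝ) (M : ℝ),
        (∀ j, AEMeasurable (F j) μ) → (∀ j, 0 ≤ s j) → 0 < M →
        (∀ j : ℤ, ∀ q ∈ ({p₀, p₁} : Set ℝ),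
          eLpNorm (F j) (ENNReal.ofReal q) μ ^ q ≤
            ENNReal.ofReal ((2:ℝ) ^ ((j:ℝ) * q) * M ^ q * s j)) →
        eLpNorm (fun x => ∑' j : ℤ, F j x) (ENNReal.ofReal p) μ ^ p ≤
          ENNReal.ofReal (C ^ p * M ^ p) * ∑' j : ℤ, ENNReal.ofReal ((2:ℝ) ^ ((j:ℝ) * p) * s j) :=
  dyadic_interpolation_general p₀ p₁ p h0 hp0 hp1
end

section
/- Let (X₁, μ₁) and (X₂, μ₂) be σ-finite measure spaces and let μ = μ₁ × μ₂ be the product measure on X₁ × X₂. Then for all 1 ≤ p < ∞ and p ≤ ν ≤ ∞ there is a constant C = C(p, ν) such that for every μ-measurable function G on X₁ × X₂, ‖G‖_{L^{p,ν}(X₁×X₂, μ)} ≤ C ( ∫_{X₁} ‖G(x₁, ·)‖_{L^{p,ν}(X₂, μ₂)}^p dμ₁(x₁) )^{1/p}. -/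
open MeasureTheory Set
open scoped ENNReal NNReal

/-- Decreasing rearrangement of `f` with respect to the measure `μ`. -/
noncomputable def rearrangement {α : Type*} [MeasurableSpace α] (μ : Measure α)
    {E : Type*} [NormedAddCommGroup E] (f : α → E) (t : ℝ) : ℝ≥0∞ :=
  sInf {s : ℝ≥0∞ | μ {x | s < (‖f x‖₊ : ℝ≥0∞)} ≤ ENNReal.ofReal t}

/-- Lorentz space quasinorm `‖f‖_{L^{p,ν}(μ)}`. -/
noncomputable def lorentzNorm {α : Type*} [MeasurableSpace α] (μ : Measure α)
    {E : Type*} [NormedAddCommGroup E] (p : ℝ) (ν : ℝ≥0∞) (f : α → E) : ℝ≥0∞ :=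
  if ν = ∞ then ⨆ t ∈ Set.Ioi (0:ℝ), ENNReal.ofReal (t ^ (1/p)) * rearrangement μ f t
  else (∫⁻ t in Set.Ioi (0:ℝ),
      (ENNReal.ofReal (t ^ (1/p)) * rearrangement μ f t) ^ ν.toReal / ENNReal.ofReal t) ^ (1/ν.toReal)

/-!
We may take `C = 1`. Write `d_f(s) = μ {x | s < ‖f x‖}`; then `s < f^*(t) ↔ t < d_f(s)`, and for the
product measure Tonelli gives `d_G(s) = ∫ d_{G(x₁, ·)}(s) dμ₁(x₁)`.

For `ν = ∞`, `‖f‖_{p,∞}^p = sup_s s^p d_f(s)`, and a supremum of integrals is at most the integral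
of the supremum.

For `ν = q < ∞`, measuring `{(t, s) | s < f^*(t)}` for the product of `t^{q/p-1} dt` and
`s^{q-1} ds` in both orders gives `‖f‖_{p,q}^q = p ∫ d_f(s)^{q/p} s^{q-1} ds`: up to the factor
`p^{p/q}`, `‖f‖_{p,q}^p` is the norm of `d_f` in `L^{q/p}(s^{q-1} ds)`. As `q/p ≥ 1`, Minkowski's
integral inequality applied to `d_G = ∫ d_{G(x₁, ·)} dμ₁` finishes the proof.
-/

theorem MeasureTheory.iSup_indicator_spanningSets_min {Y : Type*} [MeasurableSpace Y]
    (ν : Measure Y) [SigmaFinite ν] (g : Y → ℝ≥0∞) (y : Y) :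
    ⨆ n : ℕ, (spanningSets ν n).indicator (fun y => min (g y) n) y = g y := by
  refine le_antisymm (iSup_le fun n => (indicator_le_self _ _ y).trans (min_le_left _ _)) ?_
  have hm := mem_spanningSetsIndex ν y
  set m := spanningSetsIndex ν y
  calc g y = ⨆ n : ℕ, min (g y) n := by
        rw [← inf_iSup_eq, ENNReal.iSup_natCast, inf_top_eq]
    _ ≤ ⨆ n : ℕ, (spanningSets ν (max n m)).indicator (fun y => min (g y) (max n m : ℕ)) y := by
        refine iSup_mono fun n => ?_
        rw [indicator_of_mem (monotone_spanningSets ν (le_max_right n m) hm)]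
        gcongr
        exact le_max_left n m
    _ ≤ ⨆ n : ℕ, (spanningSets ν n).indicator (fun y => min (g y) n) y :=
        iSup_le fun n => le_iSup
          (fun n : ℕ => (spanningSets ν n).indicator (fun y => min (g y) n) y) (max n m)

namespace ENNReal

theorem iSup_rpow {ι : Sort*} {r : ℝ} (hr : 0 < r) (f : ι → ℝ≥0∞) :
    (⨆ i, f i) ^ r = ⨆ i, f i ^ r :=
  (orderIsoRpow r hr).map_iSup f

lemma ofReal_rpow_one_div_mul_rpow {p t : ℝ} (hp : 0 < p) (ht : 0 ≤ t) (x : ℝ≥0∞) :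
    (ENNReal.ofReal (t ^ (1 / p)) * x) ^ p = ENNReal.ofReal t * x ^ p := by
  rw [mul_rpow_of_nonneg _ _ hp.le, ofReal_rpow_of_nonneg (by positivity) hp.le,
    ← Real.rpow_mul ht, one_div_mul_cancel hp.ne', Real.rpow_one]

lemma rpow_le_of_le_rpow_mul {A R : ℝ≥0∞} {b c : ℝ} (hb : 0 ≤ b) (hc : 0 < c) (hbc : b + c = 1)
    (hA : A ≠ ∞) (h : A ≤ A ^ b * R) : A ^ c ≤ R := by
  rcases eq_or_ne A 0 with rfl | hA0
  · simp [zero_rpow_of_pos hc]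
  have hsplit : A = A ^ b * A ^ c := by
    rw [← rpow_add _ _ hA0 hA, hbc, rpow_one]
  rw [hsplit] at h
  exact (ENNReal.mul_le_mul_iff_right (by simp [hA0, hA]) (rpow_ne_top_of_nonneg hb hA)).mp
    (h.trans (by rw [← hsplit]))

variable {X Y : Type*} [MeasurableSpace X] [MeasurableSpace Y] {μ : Measure X} {ν : Measure Y}
  {F : X → Y → ℝ≥0∞}

lemma lintegral_rpow_le_of_le_lintegral [SFinite μ] [SFinite ν]
    (hF : Measurable (Function.uncurry F)) {a : ℝ} (ha : 1 < a) {h : Y → ℝ≥0∞}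
    (hh : Measurable h) (hle : ∀ y, h y ≤ ∫⁻ x, F x y ∂μ) (hfin : ∫⁻ y, h y ^ a ∂ν ≠ ∞) :
    (∫⁻ y, h y ^ a ∂ν) ^ (1 / a) ≤ ∫⁻ x, (∫⁻ y, F x y ^ a ∂ν) ^ (1 / a) ∂μ := by
  have hconj := Real.HolderConjugate.conjExponent ha
  set a' := a.conjExponent
  refine rpow_le_of_le_rpow_mul (b := 1 / a') (one_div_nonneg.mpr hconj.symm.nonneg)
    (by positivity) (by simpa [one_div, add_comm] using hconj.inv_add_inv_eq_one) hfin ?_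
  -- `h ^ a = h ^ (a - 1) * h` and Hölder with exponents `a'`, `a`
  calc ∫⁻ y, h y ^ a ∂ν = ∫⁻ y, h y ^ (a - 1) * h y ∂ν := by
        refine lintegral_congr fun y => ?_
        conv_lhs => rw [show a = (a - 1) + 1 by ring]
        rw [rpow_add_of_nonneg _ _ (by linarith) zero_le_one, rpow_one]
    _ ≤ ∫⁻ y, h y ^ (a - 1) * ∫⁻ x, F x y ∂μ ∂ν := by gcongr with y; exact hle y
    _ = ∫⁻ y, ∫⁻ x, h y ^ (a - 1) * F x y ∂μ ∂ν :=
        lintegral_congr fun y => (lintegral_const_mul _ hF.of_uncurry_right).symm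
    _ = ∫⁻ x, ∫⁻ y, h y ^ (a - 1) * F x y ∂ν ∂μ :=
        (lintegral_lintegral_swap
          (((hh.pow_const _).comp measurable_snd).mul hF).aemeasurable).symm
    _ ≤ ∫⁻ x, (∫⁻ y, (h y ^ (a - 1)) ^ a' ∂ν) ^ (1 / a') * (∫⁻ y, F x y ^ a ∂ν) ^ (1 / a) ∂μ :=
        lintegral_mono fun x => lintegral_mul_le_Lp_mul_Lq ν hconj.symm
          (hh.pow_const _).aemeasurable hF.of_uncurry_left.aemeasurable
    _ = (∫⁻ y, h y ^ a ∂ν) ^ (1 / a') * ∫⁻ x, (∫⁻ y, F x y ^ a ∂ν) ^ (1 / a) ∂μ := by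
        simp_rw [← rpow_mul, hconj.sub_one_mul_conj]
        exact lintegral_const_mul' _ _
          (rpow_ne_top_of_nonneg (one_div_nonneg.mpr hconj.symm.nonneg) hfin)

theorem lintegral_Lp_lintegral_le [SFinite μ] [SigmaFinite ν]
    (hF : Measurable (Function.uncurry F)) {a : ℝ} (ha : 1 ≤ a) :
    (∫⁻ y, (∫⁻ x, F x y ∂μ) ^ a ∂ν) ^ (1 / a) ≤ ∫⁻ x, (∫⁻ y, F x y ^ a ∂ν) ^ (1 / a) ∂μ := by
  rcases ha.eq_or_lt with rfl | ha
  · simpa using (lintegral_lintegral_swap hF.aemeasurable).ge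
  have ha0 : 0 < a := one_pos.trans ha
  set g := fun y => ∫⁻ x, F x y ∂μ
  -- truncations of `g` in height and support, with `∫ h n ^ a` finite
  set h : ℕ → Y → ℝ≥0∞ := fun n => (spanningSets ν n).indicator fun y => min (g y) n
  have hh_meas (n : ℕ) : Measurable (h n) :=
    (hF.lintegral_prod_left.min measurable_const).indicator (measurableSet_spanningSets ν n)
  have hh_le (n : ℕ) (y : Y) : h n y ≤ g y := (indicator_le_self _ _ y).trans (min_le_left _ _)
  have hh_mono : Monotone h := fun m n hmn y =>
    (indicator_le_indicator_of_subset (monotone_spanningSets ν hmn) (fun _ => zero_le) y).trans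
      (indicator_le_indicator (min_le_min_left _ (Nat.mono_cast hmn)))
  have hh_fin (n : ℕ) : ∫⁻ y, h n y ^ a ∂ν ≠ ∞ := by
    refine ne_top_of_le_ne_top ?_ (lintegral_mono (g := (spanningSets ν n).indicator
      fun _ => (n : ℝ≥0∞) ^ a) fun y => ?_)
    · rw [lintegral_indicator_const (measurableSet_spanningSets ν n)]
      exact mul_ne_top (rpow_ne_top_of_nonneg ha0.le (natCast_ne_top n))
        (measure_spanningSets_lt_top ν n).ne
    · by_cases hy : y ∈ spanningSets ν n
      · simp only [h, indicator_of_mem hy]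
        gcongr
        exact min_le_right _ _
      · simp [h, hy, zero_rpow_of_pos ha0]
  calc (∫⁻ y, g y ^ a ∂ν) ^ (1 / a) = (⨆ n, ∫⁻ y, h n y ^ a ∂ν) ^ (1 / a) := by
        rw [← lintegral_iSup (fun n => (hh_meas n).pow_const a)
          (fun m n hmn y => rpow_le_rpow (hh_mono hmn y) ha0.le)]
        simp_rw [← ENNReal.iSup_rpow ha0, h, iSup_indicator_spanningSets_min]
    _ = ⨆ n, (∫⁻ y, h n y ^ a ∂ν) ^ (1 / a) := ENNReal.iSup_rpow (by positivity) _
    _ ≤ ∫⁻ x, (∫⁻ y, F x y ^ a ∂ν) ^ (1 / a) ∂μ :=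
        iSup_le fun n => lintegral_rpow_le_of_le_lintegral hF ha (hh_meas n) (hh_le n) (hh_fin n)

end ENNReal

namespace Lorentz

variable {α E : Type*} [MeasurableSpace α] [NormedAddCommGroup E] {μ : Measure α} {f : α → E}

noncomputable def distribution (μ : Measure α) (f : α → E) (s : ℝ≥0∞) : ℝ≥0∞ :=
  μ {x | s < (‖f x‖₊ : ℝ≥0∞)}

lemma distribution_antitone : Antitone (distribution μ f) := fun _ _ h =>
  measure_mono fun _ hx => h.trans_lt hx

lemma rearrangement_antitone : Antitone (rearrangement μ f) := fun _ _ h =>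
  sInf_le_sInf fun _ hs => hs.trans (ENNReal.ofReal_le_ofReal h)

lemma distribution_le_of_forall_lt {s c : ℝ≥0∞} (h : ∀ b, s < b → distribution μ f b ≤ c) :
    distribution μ f s ≤ c := by
  rcases eq_or_ne s ∞ with rfl | hs
  · simp [distribution]
  obtain ⟨u, hu_anti, hu_mem, hu_lim⟩ := exists_seq_strictAnti_tendsto' hs.lt_top
  have hunion : {x | s < (‖f x‖₊ : ℝ≥0∞)} = ⋃ n, {x | u n < (‖f x‖₊ : ℝ≥0∞)} := by
    ext x
    simp only [mem_ofPred_eq, mem_iUnion]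
    refine ⟨fun hx => ((tendsto_order.1 hu_lim).2 _ hx).exists, fun ⟨n, hn⟩ => ?_⟩
    exact (hu_mem n).1.trans hn
  have hmono : Monotone fun n => {x | u n < (‖f x‖₊ : ℝ≥0∞)} :=
    fun m n hmn x hx => (hu_anti.antitone hmn).trans_lt hx
  rw [distribution, hunion, hmono.measure_iUnion]
  exact iSup_le fun n => h _ (hu_mem n).1

lemma rearrangement_le_iff {t : ℝ} {s : ℝ≥0∞} :
    rearrangement μ f t ≤ s ↔ distribution μ f s ≤ ENNReal.ofReal t := by
  refine ⟨fun h => (distribution_antitone h).trans ?_, fun h => sInf_le h⟩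
  refine distribution_le_of_forall_lt fun b hb => ?_
  obtain ⟨s', hs', hs'b⟩ := sInf_lt_iff.mp hb
  exact (distribution_antitone hs'b.le).trans hs'

lemma lt_rearrangement_iff {t : ℝ} {s : ℝ≥0∞} :
    s < rearrangement μ f t ↔ ENNReal.ofReal t < distribution μ f s := by
  simp only [← not_le, rearrangement_le_iff]

noncomputable def powWeightedVolume (b : ℝ) : Measure ℝ :=
  (volume.restrict (Ioi 0)).withDensity fun t => ENNReal.ofReal (t ^ (b - 1))

instance (b : ℝ) : SigmaFinite (powWeightedVolume b) := by
  unfold powWeightedVolume; infer_instance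

lemma lintegral_powWeightedVolume (b : ℝ) (g : ℝ → ℝ≥0∞) :
    ∫⁻ t, g t ∂powWeightedVolume b = ∫⁻ t in Ioi 0, ENNReal.ofReal (t ^ (b - 1)) * g t :=
  lintegral_withDensity_eq_lintegral_mul_non_measurable _ (by fun_prop)
    (by simp [ENNReal.ofReal_lt_top]) g

lemma powWeightedVolume_ofReal_lt_ofReal {b : ℝ} (hb : 0 < b) {x : ℝ} (hx : 0 ≤ x) :
    powWeightedVolume b {u | ENNReal.ofReal u < ENNReal.ofReal x}
      = ENNReal.ofReal (x ^ b) / ENNReal.ofReal b := by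
  have hS : MeasurableSet {u : ℝ | ENNReal.ofReal u < ENNReal.ofReal x} :=
    measurableSet_lt ENNReal.measurable_ofReal measurable_const
  -- the layer-cake formula for the constant function `x` on a one-point space
  have hlayer := lintegral_rpow_eq_lintegral_meas_lt_mul (μ := Measure.dirac ())
    (f := fun _ => x) (Filter.Eventually.of_forall fun _ => hx) aemeasurable_const hb
  simp only [lintegral_const, measure_univ, mul_one] at hlayer
  rw [ENNReal.eq_div_iff (by simpa using hb) ENNReal.ofReal_ne_top, hlayer, powWeightedVolume,
    withDensity_apply _ hS, ← lintegral_indicator hS]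
  congr 1
  refine setLIntegral_congr_fun measurableSet_Ioi fun t (ht : 0 < t) => ?_
  by_cases htx : t < x
  · simp [indicator, htx, not_le.mpr (ht.trans htx), ENNReal.ofReal_lt_ofReal_iff']
  · simp [indicator, htx, ENNReal.ofReal_lt_ofReal_iff']

lemma powWeightedVolume_ofReal_lt {b : ℝ} (hb : 0 < b) (c : ℝ≥0∞) :
    powWeightedVolume b {u | ENNReal.ofReal u < c} = c ^ b / ENNReal.ofReal b := by
  rcases eq_or_ne c ∞ with rfl | hc
  · have hunion : {u : ℝ | ENNReal.ofReal u < ∞} = ⋃ n : ℕ, {u | ENNReal.ofReal u < n} := by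
      ext u
      simpa using ENNReal.exists_nat_gt ENNReal.ofReal_ne_top
    have hmono : Monotone fun n : ℕ => {u : ℝ | ENNReal.ofReal u < n} :=
      fun m n hmn u (hu : ENNReal.ofReal u < m) => hu.trans_le (Nat.mono_cast hmn)
    rw [hunion, hmono.measure_iUnion, ← ENNReal.iSup_natCast, ENNReal.iSup_rpow hb,
      ENNReal.iSup_div]
    refine iSup_congr fun n => ?_
    rw [← ENNReal.ofReal_natCast, powWeightedVolume_ofReal_lt_ofReal hb n.cast_nonneg,
      ENNReal.ofReal_rpow_of_nonneg n.cast_nonneg hb.le]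
  · rw [← ENNReal.ofReal_toReal hc, powWeightedVolume_ofReal_lt_ofReal hb ENNReal.toReal_nonneg,
      ENNReal.ofReal_rpow_of_nonneg ENNReal.toReal_nonneg hb.le]

lemma lintegral_rearrangement_rpow_div {a q : ℝ} (ha : 0 < a) (hq : 0 < q) :
    (∫⁻ t, rearrangement μ f t ^ q ∂powWeightedVolume a) / ENNReal.ofReal q
      = (∫⁻ s, distribution μ f (ENNReal.ofReal s) ^ a ∂powWeightedVolume q)
        / ENNReal.ofReal a := by
  have hK : MeasurableSet {z : ℝ × ℝ | ENNReal.ofReal z.2 < rearrangement μ f z.1} :=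
    measurableSet_lt (by fun_prop) (rearrangement_antitone.measurable.comp measurable_fst)
  -- both sides compute the `powWeightedVolume a × powWeightedVolume q`-measure of this set
  calc (∫⁻ t, rearrangement μ f t ^ q ∂powWeightedVolume a) / ENNReal.ofReal q
      = (powWeightedVolume a).prod (powWeightedVolume q)
          {z : ℝ × ℝ | ENNReal.ofReal z.2 < rearrangement μ f z.1} := by
        rw [Measure.prod_apply hK, ENNReal.div_eq_inv_mul,
          ← lintegral_const_mul' _ _ (by simpa using hq)]
        refine lintegral_congr fun t => ?_
        simp only [preimage_ofPred_eq]
        rw [powWeightedVolume_ofReal_lt hq, ENNReal.div_eq_inv_mul]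
    _ = (∫⁻ s, distribution μ f (ENNReal.ofReal s) ^ a ∂powWeightedVolume q)
          / ENNReal.ofReal a := by
        rw [Measure.prod_apply_symm hK, ENNReal.div_eq_inv_mul,
          ← lintegral_const_mul' _ _ (by simpa using ha)]
        refine lintegral_congr fun s => ?_
        simp only [preimage_ofPred_eq, lt_rearrangement_iff]
        rw [powWeightedVolume_ofReal_lt ha, ENNReal.div_eq_inv_mul]

lemma lorentzNorm_top_rpow {p : ℝ} (hp : 0 < p) :
    lorentzNorm μ p ∞ f ^ p = ⨆ s, s ^ p * distribution μ f s := by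
  rw [lorentzNorm, if_pos rfl, ENNReal.iSup_rpow hp]
  simp_rw [ENNReal.iSup_rpow hp]
  refine le_antisymm (iSup₂_le fun t (ht : 0 < t) => ?_) (iSup_le fun s => ?_)
  · rw [ENNReal.ofReal_rpow_one_div_mul_rpow hp ht.le,
      ← ENNReal.iSup_lt_eq_self (rearrangement μ f t)]
    simp_rw [ENNReal.iSup_rpow hp, ENNReal.mul_iSup]
    refine iSup₂_le fun s hs => ?_
    calc ENNReal.ofReal t * s ^ p ≤ s ^ p * distribution μ f s := by
          rw [mul_comm]; gcongr; exact (lt_rearrangement_iff.mp hs).le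
      _ ≤ ⨆ s, s ^ p * distribution μ f s := le_iSup (fun s => s ^ p * distribution μ f s) s
  · rw [← ENNReal.iSup_lt_eq_self (distribution μ f s)]
    simp_rw [ENNReal.mul_iSup]
    refine iSup₂_le fun b hb => ?_
    have hb_top : b ≠ ∞ := ne_top_of_lt hb
    rcases eq_or_ne b 0 with rfl | hb0
    · simp
    have ht : 0 < b.toReal := ENNReal.toReal_pos hb0 hb_top
    have hs : s < rearrangement μ f b.toReal := by
      rwa [lt_rearrangement_iff, ENNReal.ofReal_toReal hb_top]
    refine le_iSup₂_of_le b.toReal ht ?_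
    rw [ENNReal.ofReal_rpow_one_div_mul_rpow hp ht.le, ENNReal.ofReal_toReal hb_top, mul_comm]
    gcongr

lemma lorentzNorm_rpow_toReal {p : ℝ} {ν : ℝ≥0∞} (hν : ν ≠ ∞) (hν0 : ν ≠ 0) :
    lorentzNorm μ p ν f ^ ν.toReal
      = ∫⁻ t, rearrangement μ f t ^ ν.toReal ∂powWeightedVolume (ν.toReal / p) := by
  have hq : 0 < ν.toReal := ENNReal.toReal_pos hν0 hν
  rw [lorentzNorm, if_neg hν, ← ENNReal.rpow_mul, one_div_mul_cancel hq.ne', ENNReal.rpow_one,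
    lintegral_powWeightedVolume]
  refine setLIntegral_congr_fun measurableSet_Ioi fun t (ht : 0 < t) => ?_
  rw [ENNReal.mul_rpow_of_nonneg _ _ hq.le, ENNReal.ofReal_rpow_of_nonneg (by positivity) hq.le,
    ← Real.rpow_mul ht.le, Real.rpow_sub ht, Real.rpow_one, ENNReal.ofReal_div_of_pos ht,
    one_div_mul_eq_div, ENNReal.div_eq_inv_mul, ENNReal.div_eq_inv_mul]
  ring

lemma lorentzNorm_rpow_eq {p : ℝ} {ν : ℝ≥0∞} (hp : 0 < p) (hν : ν ≠ ∞) (hν0 : ν ≠ 0) :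
    lorentzNorm μ p ν f ^ p = ENNReal.ofReal p ^ (p / ν.toReal) *
      (∫⁻ s, distribution μ f (ENNReal.ofReal s) ^ (ν.toReal / p) ∂powWeightedVolume ν.toReal)
        ^ (p / ν.toReal) := by
  set q := ν.toReal
  have hq : 0 < q := ENNReal.toReal_pos hν0 hν
  have ha : 0 < q / p := div_pos hq hp
  have hq_pow : lorentzNorm μ p ν f ^ q = ENNReal.ofReal p *
      ∫⁻ s, distribution μ f (ENNReal.ofReal s) ^ (q / p) ∂powWeightedVolume q := by
    have h := lintegral_rearrangement_rpow_div (μ := μ) (f := f) ha hq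
    rw [ENNReal.div_eq_div_iff (by simpa using ha) ENNReal.ofReal_ne_top (by simpa using hq)
      ENNReal.ofReal_ne_top, ← lorentzNorm_rpow_toReal hν hν0,
      show ENNReal.ofReal q = ENNReal.ofReal (q / p) * ENNReal.ofReal p by
        rw [← ENNReal.ofReal_mul ha.le, div_mul_cancel₀ _ hp.ne'], mul_assoc] at h
    exact (ENNReal.mul_right_inj (by simpa using ha) ENNReal.ofReal_ne_top).mp h
  rw [← ENNReal.mul_rpow_of_nonneg _ _ (by positivity), ← hq_pow, ← ENNReal.rpow_mul,
    mul_div_cancel₀ _ hq.ne']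

section Product

variable {X₁ X₂ E : Type*} [MeasurableSpace X₁] [MeasurableSpace X₂] [NormedAddCommGroup E]
  [MeasurableSpace E] [OpensMeasurableSpace E] {μ₁ : Measure X₁} {μ₂ : Measure X₂}
  {G : X₁ × X₂ → E}

lemma distribution_prod [SFinite μ₂] (hG : Measurable G) (s : ℝ≥0∞) :
    distribution (μ₁.prod μ₂) G s = ∫⁻ x, distribution μ₂ (fun y => G (x, y)) s ∂μ₁ :=
  Measure.prod_apply (measurableSet_lt measurable_const hG.nnnorm.coe_nnreal_ennreal)

lemma lorentzNorm_top_rpow_prod_le [SFinite μ₂] {p : ℝ} (hp : 0 < p) (hG : Measurable G) :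
    lorentzNorm (μ₁.prod μ₂) p ∞ G ^ p ≤ ∫⁻ x, lorentzNorm μ₂ p ∞ (fun y => G (x, y)) ^ p ∂μ₁ := by
  simp_rw [lorentzNorm_top_rpow hp, distribution_prod hG]
  refine (iSup_mono fun s => (lintegral_const_mul _ ?_).ge).trans (iSup_lintegral_le _)
  exact measurable_measure_prodMk_left
    (measurableSet_lt measurable_const hG.nnnorm.coe_nnreal_ennreal)

lemma lorentzNorm_rpow_prod_le [SFinite μ₁] [SFinite μ₂] {p : ℝ} {ν : ℝ≥0∞} (hp : 0 < p)
    (hpν : ENNReal.ofReal p ≤ ν) (hν : ν ≠ ∞) (hG : Measurable G) :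
    lorentzNorm (μ₁.prod μ₂) p ν G ^ p ≤ ∫⁻ x, lorentzNorm μ₂ p ν (fun y => G (x, y)) ^ p ∂μ₁ := by
  have hν0 : ν ≠ 0 := (ENNReal.ofReal_pos.mpr hp).trans_le hpν |>.ne'
  have ha : 1 ≤ ν.toReal / p := by
    rw [one_le_div hp, ← ENNReal.ofReal_le_iff_le_toReal hν]; exact hpν
  have hF : Measurable (Function.uncurry fun x (s : ℝ) =>
      distribution μ₂ (fun y => G (x, y)) (ENNReal.ofReal s)) :=
    measurable_measure_prodMk_left (s := {w : (X₁ × ℝ) × X₂ |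
      ENNReal.ofReal w.1.2 < ‖G (w.1.1, w.2)‖₊}) (measurableSet_lt (by fun_prop)
        (hG.comp (by fun_prop)).nnnorm.coe_nnreal_ennreal)
  simp_rw [lorentzNorm_rpow_eq hp hν hν0]
  rw [lintegral_const_mul' _ _
    (ENNReal.rpow_ne_top_of_nonneg (by positivity) ENNReal.ofReal_ne_top)]
  gcongr
  simp_rw [← one_div_div ν.toReal p, distribution_prod hG]
  exact ENNReal.lintegral_Lp_lintegral_le hF ha

end Product

end Lorentz

open Lorentz in
/-- Fubini-type inequality for Lorentz quasinorms on a product measure space: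
for `1 ≤ p < ∞`, `p ≤ ν ≤ ∞`,
`‖G‖_{L^{p,ν}(μ₁×μ₂)} ≤ C (∫ ‖G(x₁,·)‖_{L^{p,ν}(μ₂)}^p dμ₁)^{1/p}`. -/
theorem lorentz_fubini (p : ℝ) (ν : ℝ≥0∞) (hp : 1 ≤ p) (hpν : ENNReal.ofReal p ≤ ν) :
    ∃ C : ℝ, 0 < C ∧
      ∀ (X₁ X₂ : Type) (_ : MeasurableSpace X₁) (_ : MeasurableSpace X₂)
        (μ₁ : Measure X₁) (μ₂ : Measure X₂), SigmaFinite μ₁ → SigmaFinite μ₂ →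
        ∀ (G : X₁ × X₂ → ℂ), Measurable G →
        lorentzNorm (μ₁.prod μ₂) p ν G ≤
          ENNReal.ofReal C *
            (∫⁻ x₁, lorentzNorm μ₂ p ν (fun x₂ => G (x₁, x₂)) ^ p ∂μ₁) ^ (1/p) := by
  refine ⟨1, one_pos, fun X₁ X₂ _ _ μ₁ μ₂ _ _ G hG => ?_⟩
  have hp0 : 0 < p := one_pos.trans_le hp
  rw [ENNReal.ofReal_one, one_mul, one_div, ENNReal.le_rpow_inv_iff hp0]
  rcases eq_or_ne ν ∞ with rfl | hν
  · exact lorentzNorm_top_rpow_prod_le hp0 hG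
  · exact lorentzNorm_rpow_prod_le hp0 hpν hν hG
end

section
/- Let d ≥ 1, λ > 0, and 1 < p < ∞. The function s ↦ (1+|s|)^{-λ-1-(d-1)/2} belongs to the weak Lorentz space L^{p,∞}(ℝ, (1+|r|)^{d-1} dr) if and only if λ ≥ d/p - (d+1)/2. -/
/-!
Write `b = λ + (d+1)/2`, so the function is `(1+|s|)^{-b}`. Its superlevel set at height
`a ∈ (0,1]` is the interval `|s| < a^{-1/b} - 1`, whose weighted measure is `2(a^{-d/b} - 1)/d`;
inverting this gives the decreasing rearrangement `f*(t) = (1 + dt/2)^{-b/d}`. Finally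
`t^q (1+ct)^{-e} = (t/(1+ct))^q (1+ct)^{q-e}` with `t/(1+ct)` bounded above, and bounded below
for large `t`, so `t^{1/p} f*(t)` is bounded iff `1/p ≤ b/d`, i.e. `λ ≥ d/p - (d+1)/2`.
-/

open MeasureTheory Set
open scoped ENNReal NNReal
open Filter

theorem rearrangement_eq_of_distribution {α : Type*} [MeasurableSpace α] {μ : Measure α}
    {E : Type*} [NormedAddCommGroup E] {f : α → E} {t : ℝ} {c : ℝ≥0∞}
    (hc : μ {x | c < (‖f x‖₊ : ℝ≥0∞)} ≤ ENNReal.ofReal t)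
    (hlt : ∀ s < c, ENNReal.ofReal t < μ {x | s < (‖f x‖₊ : ℝ≥0∞)}) :
    rearrangement μ f t = c :=
  le_antisymm (sInf_le hc) (le_sInf fun _ hs => not_lt.1 fun h => (hlt _ h).not_ge hs)

theorem biSup_ofReal_lt_top_iff_bddAbove {ι : Type*} {s : Set ι} {g : ι → ℝ} :
    ⨆ i ∈ s, ENNReal.ofReal (g i) < ∞ ↔ BddAbove (g '' s) := by
  constructor
  · intro h
    refine ⟨(⨆ i ∈ s, ENNReal.ofReal (g i)).toReal, forall_mem_image.2 fun i hi => ?_⟩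
    exact (ENNReal.ofReal_le_iff_le_toReal h.ne).1
      (le_iSup₂ (f := fun i (_ : i ∈ s) => ENNReal.ofReal (g i)) i hi)
  · rintro ⟨M, hM⟩
    refine lt_of_le_of_lt (b := ENNReal.ofReal M) ?_ ENNReal.ofReal_lt_top
    exact iSup₂_le fun i hi => ENNReal.ofReal_le_ofReal (hM (mem_image_of_mem g hi))

namespace Real

theorem rpow_mul_one_add_mul_rpow_neg_eq {q e c t : ℝ} (ht : 0 ≤ t) (hc : 0 ≤ c) :
    t ^ q * (1 + c * t) ^ (-e) = (t / (1 + c * t)) ^ q * (1 + c * t) ^ (q - e) := by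
  have hpos : 0 < 1 + c * t := by positivity
  rw [div_rpow ht hpos.le, sub_eq_add_neg, rpow_add hpos]
  field_simp

theorem rpow_mul_one_add_mul_rpow_neg_le {q e c t : ℝ} (hq : 0 ≤ q) (hqe : q ≤ e) (hc : 0 < c)
    (ht : 0 ≤ t) : t ^ q * (1 + c * t) ^ (-e) ≤ c⁻¹ ^ q := by
  have hratio : t / (1 + c * t) ≤ c⁻¹ := by
    rw [div_le_iff₀ (by positivity)]
    field_simp
    linarith
  have hdecay : (1 + c * t) ^ (q - e) ≤ 1 :=
    rpow_le_one_of_one_le_of_nonpos (by nlinarith) (by linarith)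
  rw [rpow_mul_one_add_mul_rpow_neg_eq ht hc.le]
  exact (mul_le_of_le_one_right (by positivity) hdecay).trans (by gcongr)

theorem tendsto_rpow_mul_one_add_mul_rpow_neg_atTop {q e c : ℝ} (hqe : e < q) (he : 0 ≤ e)
    (hc : 0 < c) :
    Tendsto (fun t => t ^ q * (1 + c * t) ^ (-e)) atTop atTop := by
  have hgrow : Tendsto (fun t => (2 * c)⁻¹ ^ q * (1 + c * t) ^ (q - e)) atTop atTop :=
    ((tendsto_rpow_atTop (by linarith)).comp (tendsto_atTop_add_const_left _ 1
      (tendsto_id.const_mul_atTop hc))).const_mul_atTop (by positivity)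
  refine tendsto_atTop_mono' _ ?_ hgrow
  filter_upwards [eventually_ge_atTop c⁻¹] with t ht
  have ht0 : 0 ≤ t := (inv_pos.2 hc).le.trans ht
  have hratio : (2 * c)⁻¹ ≤ t / (1 + c * t) := by
    have : 1 ≤ c * t := by rwa [inv_le_iff_one_le_mul₀' hc] at ht
    rw [le_div_iff₀ (by positivity)]
    field_simp
    linarith
  rw [rpow_mul_one_add_mul_rpow_neg_eq ht0 hc.le]
  gcongr
  linarith

theorem bddAbove_rpow_mul_one_add_mul_rpow_neg_iff {q e c : ℝ} (hq : 0 ≤ q) (he : 0 ≤ e)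
    (hc : 0 < c) :
    BddAbove ((fun t => t ^ q * (1 + c * t) ^ (-e)) '' Ioi 0) ↔ q ≤ e := by
  constructor
  · rintro ⟨M, hM⟩
    by_contra! hlt
    have hlarge := (tendsto_rpow_mul_one_add_mul_rpow_neg_atTop hlt he hc).eventually_gt_atTop M
    obtain ⟨t, hMt, ht⟩ := (hlarge.and (eventually_gt_atTop 0)).exists
    exact (hM (mem_image_of_mem _ ht)).not_gt hMt
  · intro hqe
    exact ⟨c⁻¹ ^ q, forall_mem_image.2 fun t ht =>
      rpow_mul_one_add_mul_rpow_neg_le hq hqe hc (le_of_lt ht)⟩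

end Real

theorem integral_Ioo_one_add_abs_pow (n : ℕ) {R : ℝ} (hR : 0 ≤ R) :
    ∫ x in Ioo (-R) R, (1 + |x|) ^ n = 2 * ((1 + R) ^ (n + 1) - 1) / (n + 1) := by
  have hcont : Continuous fun x : ℝ => (1 + |x|) ^ n := by fun_prop
  have hright : ∫ x in (0:ℝ)..R, (1 + |x|) ^ n = ((1 + R) ^ (n + 1) - 1) / (n + 1) := by
    rw [intervalIntegral.integral_congr (g := fun x => (1 + x) ^ n) fun x hx => by
        rw [uIcc_of_le hR] at hx; simp only [abs_of_nonneg hx.1],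
      intervalIntegral.integral_comp_add_left (fun y => y ^ n), integral_pow]
    simp
  have hleft : ∫ x in (-R)..0, (1 + |x|) ^ n = ∫ x in (0:ℝ)..R, (1 + |x|) ^ n := by
    simpa using
      (intervalIntegral.integral_comp_neg (a := 0) (b := R) fun x => (1 + |x|) ^ n).symm
  rw [integral_Ioc_eq_integral_Ioo.symm, ← intervalIntegral.integral_of_le (by linarith),
    ← intervalIntegral.integral_add_adjacent_intervals (b := 0) (hcont.intervalIntegrable _ _)
      (hcont.intervalIntegrable _ _), hleft, hright]
  ring

noncomputable def radialMeasure (d : ℕ) : Measure ℝ :=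
  volume.withDensity fun r => ENNReal.ofReal ((1 + |r|) ^ (d - 1))

theorem radialMeasure_Ioo {d : ℕ} (hd : 1 ≤ d) {R : ℝ} (hR : 0 ≤ R) :
    radialMeasure d (Ioo (-R) R) = ENNReal.ofReal (2 * ((1 + R) ^ d - 1) / d) := by
  have hcont : Continuous fun x : ℝ => (1 + |x|) ^ (d - 1) := by fun_prop
  rw [radialMeasure, withDensity_apply _ measurableSet_Ioo,
    ← ofReal_integral_eq_lintegral_ofReal (hcont.integrableOn_Icc.mono_set Ioo_subset_Icc_self)
      (Eventually.of_forall fun x => by positivity),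
    integral_Ioo_one_add_abs_pow _ hR, Nat.sub_add_cancel hd, Nat.cast_pred hd, sub_add_cancel]

theorem lt_one_add_abs_rpow_neg_iff {a b x : ℝ} (ha : 0 < a) (hb : 0 < b) :
    a < (1 + |x|) ^ (-b) ↔ |x| < a ^ (-b⁻¹) - 1 := by
  rw [← Real.lt_rpow_inv_iff_of_neg (by positivity) ha (neg_neg_of_pos hb), inv_neg]
  constructor <;> intro h <;> linarith

theorem radialMeasure_lt_one_add_abs_rpow_neg {d : ℕ} (hd : 1 ≤ d) {a b : ℝ} (ha : 0 < a)
    (ha1 : a ≤ 1) (hb : 0 < b) :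
    radialMeasure d {x | ENNReal.ofReal a < (‖(1 + |x|) ^ (-b)‖₊ : ℝ≥0∞)} =
      ENNReal.ofReal (2 * (a ^ (-(d / b)) - 1) / d) := by
  have hset : {x : ℝ | ENNReal.ofReal a < (‖(1 + |x|) ^ (-b)‖₊ : ℝ≥0∞)} =
      Ioo (-(a ^ (-b⁻¹) - 1)) (a ^ (-b⁻¹) - 1) := by
    ext x
    have hx : 0 < 1 + |x| := by positivity
    rw [mem_ofPred_eq, ← enorm_eq_nnnorm, Real.enorm_eq_ofReal (by positivity),
      ENNReal.ofReal_lt_ofReal_iff (by positivity), lt_one_add_abs_rpow_neg_iff ha hb, mem_Ioo,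
      ← abs_lt]
  have hR : 0 ≤ a ^ (-b⁻¹) - 1 := by
    have : 1 ≤ a ^ (-b⁻¹) :=
      Real.one_le_rpow_of_pos_of_le_one_of_nonpos ha ha1 (by simp [hb.le])
    linarith
  rw [hset, radialMeasure_Ioo hd hR, add_sub_cancel, ← Real.rpow_natCast,
    ← Real.rpow_mul ha.le]
  congr 4
  rw [neg_mul, inv_mul_eq_div]

theorem rearrangement_one_add_abs_rpow_neg {d : ℕ} (hd : 1 ≤ d) {b t : ℝ} (hb : 0 < b)
    (ht : 0 < t) :
    rearrangement (radialMeasure d) (fun s : ℝ => (1 + |s|) ^ (-b)) t =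
      ENNReal.ofReal ((1 + d / 2 * t) ^ (-(b / d))) := by
  have hd0 : (0 : ℝ) < d := by exact_mod_cast hd
  set X : ℝ := 1 + d / 2 * t
  have hX : 1 < X := lt_add_of_pos_right 1 (by positivity)
  set c : ℝ := X ^ (-(b / d))
  have hc0 : 0 < c := by positivity
  have hc1 : c ≤ 1 :=
    Real.rpow_le_one_of_one_le_of_nonpos hX.le (neg_nonpos.2 (by positivity))
  have hcX : c ^ (-(d / b)) = X := by
    rw [← Real.rpow_mul (by positivity), show -(b / d) * -(d / b) = (1 : ℝ) by field_simp,
      Real.rpow_one]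
  have ht_eq : 2 * (X - 1) / d = t := by field_simp; ring
  refine rearrangement_eq_of_distribution ?_ fun s hs => ?_
  · rw [radialMeasure_lt_one_add_abs_rpow_neg hd hc0 hc1 hb, hcX, ht_eq]
  · obtain ⟨a, -, hsa, hac⟩ := ENNReal.lt_iff_exists_real_btwn.1 hs
    have ha0 : 0 < a := ENNReal.ofReal_pos.1 (pos_of_gt hsa)
    have hac : a < c := (ENNReal.ofReal_lt_ofReal_iff hc0).1 hac
    have hXa : X < a ^ (-(d / b)) :=
      hcX ▸ Real.rpow_lt_rpow_of_neg ha0 hac (neg_neg_of_pos (by positivity))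
    calc ENNReal.ofReal t
        < ENNReal.ofReal (2 * (a ^ (-(d / b)) - 1) / d) := by
          rw [ENNReal.ofReal_lt_ofReal_iff_of_nonneg ht.le, ← ht_eq]
          gcongr
      _ = radialMeasure d {x | ENNReal.ofReal a < (‖(1 + |x|) ^ (-b)‖₊ : ℝ≥0∞)} :=
          (radialMeasure_lt_one_add_abs_rpow_neg hd ha0 (hac.le.trans hc1) hb).symm
      _ ≤ radialMeasure d {x | s < (‖(1 + |x|) ^ (-b)‖₊ : ℝ≥0∞)} :=
          measure_mono fun x hx => hsa.trans hx

/-- The function `s ↦ (1+|s|)^{-λ-1-(d-1)/2}` belongs to the weak Lorentz space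
`L^{p,∞}(ℝ, (1+|r|)^{d-1} dr)` if and only if `λ ≥ d/p - (d+1)/2`. -/
theorem mem_weak_Lp_iff (d : ℕ) (hd : 1 ≤ d) (lam : ℝ) (hlam : 0 < lam)
    (p : ℝ) (hp1 : 1 < p) :
    lorentzNorm
        ((volume : Measure ℝ).withDensity fun r => ENNReal.ofReal ((1 + |r|) ^ (d - 1)))
        p ∞ (fun s : ℝ => (1 + |s|) ^ (-lam - 1 - ((d:ℝ) - 1) / 2)) < ∞ ↔
      (d:ℝ) / p - ((d:ℝ) + 1) / 2 ≤ lam := by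
  have hd0 : (0 : ℝ) < d := by exact_mod_cast hd
  set b := lam + ((d : ℝ) + 1) / 2
  have hb : 0 < b := by positivity
  have hexp : -lam - 1 - ((d : ℝ) - 1) / 2 = -b := by ring
  have hgoal : (d : ℝ) / p - ((d : ℝ) + 1) / 2 ≤ lam ↔ 1 / p ≤ b / d := by
    rw [le_div_iff₀ hd0, one_div_mul_eq_div]
    constructor <;> intro h <;> linarith
  simp only [hexp, hgoal, lorentzNorm, if_true]
  change ⨆ t ∈ Ioi (0 : ℝ), _ * rearrangement (radialMeasure d) _ t < ∞ ↔ _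
  rw [biSup_congr fun t ht => by
      rw [rearrangement_one_add_abs_rpow_neg hd hb ht,
        ← ENNReal.ofReal_mul (Real.rpow_nonneg (le_of_lt ht) _)],
    biSup_ofReal_lt_top_iff_bddAbove]
  exact Real.bddAbove_rpow_mul_one_add_mul_rpow_neg_iff (by positivity) (by positivity)
    (by positivity)
end

section
/- Let d ≥ 1 and n ≥ 1. Suppose Ẽ_n : ℝ^d → ℂ satisfies |Ẽ_n(y)| ≤ C_N 2^{-nN}(1+|y|)^{-N} for all N, let ζ be a Schwartz function on ℝ^{d+1}, let b ∈ ℝ with |b| ≤ 2, and let Γ̂ ∈ L¹(ℝ). Define E_n(x,t) = ∫_{2^n}^{2^{n+1}} Γ̂(s) ∫_{ℝ^d} ζ(x−y, t−bs) s^{-d} Ẽ_n(s^{-1} y) dy ds. Then |E_n(x,t)| ≤ C ‖Γ̂‖_{L¹(ℝ)} 2^{-n} (1+|x|+|t|)^{-d-2}, with C independent of n, b, and Γ̂. -/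
open MeasureTheory Set
open scoped ENNReal

set_option maxHeartbeats 1000000 in
/-- Pointwise bound for the rescaled error kernel
`E_n(x,t) = ∫_{2^n}^{2^{n+1}} Γ̂(s) ∫ ζ(x−y, t−bs) s^{-d} Ẽ_n(s^{-1}y) dy ds`:
if `|Ẽ_n(y)| ≤ C_N 2^{-nN}(1+|y|)^{-N}` for all `N`, `ζ` is Schwartz and `|b| ≤ 2`, then
`|E_n(x,t)| ≤ C ‖Γ̂‖₁ 2^{-n} (1+|x|+|t|)^{-d-2}`, with `C` independent of `n`, `b`, `Γ̂`. -/
theorem error_kernel_pointwise_bound (d : ℕ) (hd : 1 ≤ d)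
    (ζ : SchwartzMap (EuclideanSpace ℝ (Fin d) × ℝ) ℂ) (CN : ℕ → ℝ) :
    ∃ C : ℝ, 0 < C ∧
      ∀ (n : ℕ), 1 ≤ n → ∀ (Etil : EuclideanSpace ℝ (Fin d) → ℂ) (b : ℝ)
        (Γhat : ℝ → ℂ), |b| ≤ 2 →
        (∀ (N : ℕ) (y : EuclideanSpace ℝ (Fin d)),
          ‖Etil y‖ ≤ CN N * (2:ℝ) ^ (-(n:ℝ) * N) * (1 + ‖y‖) ^ (-(N:ℝ))) →
        Integrable Γhat →
        ∀ (x : EuclideanSpace ℝ (Fin d)) (t : ℝ),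
          ‖∫ s in Set.Ioo ((2:ℝ)^n) ((2:ℝ)^(n+1)),
              Γhat s • ∫ y : EuclideanSpace ℝ (Fin d),
                ζ (x - y, t - b * s) * (((s ^ (-(d:ℝ)) : ℝ) : ℂ) * Etil (s⁻¹ • y))‖ ≤
            C * (∫ s : ℝ, ‖Γhat s‖) * (2:ℝ)^(-(n:ℝ)) * (1 + ‖x‖ + |t|) ^ (-((d:ℝ) + 2)) := by
  classical
  set m : ℕ := d + 2 with hm
  set Nb : ℕ := 2 * d + 3 with hNbdef
  -- Schwartz decay constant
  obtain ⟨K, hKnn, hζ⟩ : ∃ K : ℝ, 0 ≤ K ∧ ∀ z, (1 + ‖z‖) ^ (2*m) * ‖ζ z‖ ≤ K := by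
    refine ⟨2 ^ (2*m) * (Finset.Iic (2*m, 0)).sup (fun p => SchwartzMap.seminorm ℝ p.1 p.2) ζ,
      by positivity, fun z => ?_⟩
    simpa [norm_iteratedFDeriv_zero] using
      SchwartzMap.one_add_le_sup_seminorm_apply (𝕜 := ℝ) (m := (2*m, 0)) le_rfl le_rfl ζ z
  -- integrable decaying profile
  have hIhint : Integrable (fun u : EuclideanSpace ℝ (Fin d) => (1 + ‖u‖) ^ (-((d:ℝ)+1))) := by
    apply integrable_one_add_norm
    rw [finrank_euclideanSpace_fin]; linarith
  set Ih : ℝ := ∫ u : EuclideanSpace ℝ (Fin d), (1 + ‖u‖) ^ (-((d:ℝ)+1)) with hIhdef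
  have hIhnn : 0 ≤ Ih := integral_nonneg fun u => by positivity
  set D : ℝ := max (CN Nb) 0 with hDdef
  have hDnn : 0 ≤ D := le_max_right _ _
  refine ⟨K * D * 10 ^ m * Ih + 1, by positivity, ?_⟩
  intro n hn Etil b Γhat hb hE hΓ x t
  have hQpos : (0:ℝ) < 1 + ‖x‖ + |t| := by positivity
  set Q : ℝ := 1 + ‖x‖ + |t| with hQdef
  set M : ℝ := K * D * 10 ^ m * Ih * (2:ℝ) ^ (-(n:ℝ)) * Q ^ (-((d:ℝ)+2)) with hMdef
  have hMnn : 0 ≤ M := by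
    have h1 : (0:ℝ) ≤ K * D * 10 ^ m * Ih := by positivity
    have h2 : (0:ℝ) ≤ (2:ℝ) ^ (-(n:ℝ)) := Real.rpow_nonneg (by norm_num) _
    have h3 : (0:ℝ) ≤ Q ^ (-((d:ℝ)+2)) := Real.rpow_nonneg hQpos.le _
    rw [hMdef]
    exact mul_nonneg (mul_nonneg h1 h2) h3
  -- the uniform bound on the inner integral
  have hA : ∀ s ∈ Set.Ioo ((2:ℝ)^n) ((2:ℝ)^(n+1)),
      ‖∫ y : EuclideanSpace ℝ (Fin d),
          ζ (x - y, t - b * s) * (((s ^ (-(d:ℝ)) : ℝ) : ℂ) * Etil (s⁻¹ • y))‖ ≤ M := by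
    intro s hs
    have hs0 : (0:ℝ) < s := lt_trans (by positivity) hs.1
    have hsd : (0:ℝ) < s ^ (-(d:ℝ)) := Real.rpow_pos_of_pos hs0 _
    set B : ℝ := K * D * 10 ^ m * (2:ℝ) ^ (-(n:ℝ)) * Q ^ (-((d:ℝ)+2)) with hBdef
    set g : EuclideanSpace ℝ (Fin d) → ℝ := fun y =>
      (B * s ^ (-(d:ℝ))) * (1 + ‖s⁻¹ • y‖) ^ (-((d:ℝ)+1)) with hgdef
    have hgint : Integrable g := (hIhint.comp_smul (inv_ne_zero hs0.ne')).const_mul _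
    have hpt : ∀ y : EuclideanSpace ℝ (Fin d),
        ‖ζ (x - y, t - b * s) * (((s ^ (-(d:ℝ)) : ℝ) : ℂ) * Etil (s⁻¹ • y))‖ ≤ g y := by
      intro y
      set u : EuclideanSpace ℝ (Fin d) := s⁻¹ • y with hudef
      set P : EuclideanSpace ℝ (Fin d) × ℝ := (x - y, t - b * s) with hPdef
      have hynorm : ‖y‖ = s * ‖u‖ := by
        have : y = s • u := by rw [hudef, smul_inv_smul₀ hs0.ne']
        rw [this, norm_smul, Real.norm_eq_abs, abs_of_pos hs0]
      have hRnn : (0:ℝ) < 1 + ‖P‖ := by positivity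
      have hUnn : (0:ℝ) < 1 + ‖u‖ := by positivity
      have h2n : (1:ℝ) ≤ 2 ^ n := one_le_pow₀ (by norm_num)
      have h2nn : (0:ℝ) ≤ 2 ^ n := by positivity
      -- the key scalar inequality
      have hkey : Q ≤ (1 + ‖P‖)^2 * (10 * 2 ^ n) * (1 + ‖u‖) := by
        have h1 : ‖x‖ ≤ ‖x - y‖ + ‖y‖ := by
          simpa using norm_add_le (x - y) y
        have h2 : |t| ≤ |t - b * s| + |b * s| := by
          simpa using abs_add_le (t - b * s) (b * s)
        have h3 : ‖x - y‖ ≤ ‖P‖ := norm_fst_le P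
        have h4 : |t - b * s| ≤ ‖P‖ := norm_snd_le P
        have h5 : s ≤ 2 * 2 ^ n := by
          have := hs.2.le; rw [pow_succ] at this; linarith
        have h6 : |b * s| ≤ 2 * (2 * 2 ^ n) := by
          rw [abs_mul, abs_of_pos hs0]
          exact mul_le_mul hb h5 hs0.le (by norm_num)
        have h7 : ‖y‖ ≤ (2 * 2 ^ n) * ‖u‖ :=
          hynorm ▸ mul_le_mul_of_nonneg_right h5 (norm_nonneg _)
        have hPnn : (0:ℝ) ≤ ‖P‖ := norm_nonneg _
        have hunn : (0:ℝ) ≤ ‖u‖ := norm_nonneg _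
        rw [hQdef]
        nlinarith [mul_nonneg hPnn hunn, mul_nonneg (mul_nonneg hPnn hPnn) hunn,
          mul_nonneg hunn h2nn, mul_nonneg hPnn h2nn,
          mul_nonneg (mul_nonneg hPnn hunn) h2nn,
          mul_nonneg (mul_nonneg (mul_nonneg hPnn hPnn) hunn) h2nn,
          mul_nonneg (mul_nonneg hPnn hPnn) h2nn]
      -- powers of the key inequality
      have hkeym : Q ^ m ≤ (1 + ‖P‖)^(2*m) * (10 ^ m * 2 ^ (n*m)) * (1 + ‖u‖) ^ m := by
        calc Q ^ m ≤ ((1 + ‖P‖)^2 * (10 * 2 ^ n) * (1 + ‖u‖)) ^ m :=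
              pow_le_pow_left₀ hQpos.le hkey m
          _ = (1 + ‖P‖)^(2*m) * (10 ^ m * 2 ^ (n*m)) * (1 + ‖u‖) ^ m := by
              rw [mul_pow, mul_pow, mul_pow, ← pow_mul, ← pow_mul]
      -- core product inequality (without the s^{-d} factor)
      have hcore : ‖ζ P‖ * ‖Etil u‖ ≤
          K * D * 10 ^ m * (2:ℝ) ^ (-(n:ℝ)) * Q ^ (-((d:ℝ)+2)) * (1 + ‖u‖) ^ (-((d:ℝ)+1)) := by
        have hζP : ‖ζ P‖ ≤ K / (1 + ‖P‖)^(2*m) := by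
          rw [le_div_iff₀ (by positivity)]
          calc ‖ζ P‖ * (1 + ‖P‖)^(2*m) = (1 + ‖P‖)^(2*m) * ‖ζ P‖ := by ring
            _ ≤ K := hζ P
        have hEu : ‖Etil u‖ ≤ D * ((2:ℝ) ^ (n*Nb))⁻¹ * ((1 + ‖u‖) ^ Nb)⁻¹ := by
          have e1 : (2:ℝ) ^ (-(n:ℝ) * Nb) = ((2:ℝ) ^ (n*Nb))⁻¹ := by
            rw [← Real.rpow_natCast 2 (n*Nb), ← Real.rpow_neg (by norm_num)]
            norm_num
          have e2 : (1 + ‖u‖) ^ (-(Nb:ℝ)) = ((1 + ‖u‖) ^ Nb)⁻¹ := by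
            rw [← Real.rpow_natCast (1 + ‖u‖) Nb, ← Real.rpow_neg hUnn.le]
          calc ‖Etil u‖ ≤ CN Nb * (2:ℝ) ^ (-(n:ℝ) * Nb) * (1 + ‖u‖) ^ (-(Nb:ℝ)) := hE Nb u
            _ ≤ D * (2:ℝ) ^ (-(n:ℝ) * Nb) * (1 + ‖u‖) ^ (-(Nb:ℝ)) := by
                have hCND : CN Nb ≤ D := le_max_left _ _
                have hr1 : (0:ℝ) ≤ (2:ℝ) ^ (-(n:ℝ) * Nb) := Real.rpow_nonneg (by norm_num) _
                have hr2 : (0:ℝ) ≤ (1 + ‖u‖) ^ (-(Nb:ℝ)) := Real.rpow_nonneg hUnn.le _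
                exact mul_le_mul_of_nonneg_right
                  (mul_le_mul_of_nonneg_right hCND hr1) hr2
            _ = D * ((2:ℝ) ^ (n*Nb))⁻¹ * ((1 + ‖u‖) ^ Nb)⁻¹ := by rw [e1, e2]
        have eQ : Q ^ (-((d:ℝ)+2)) = (Q ^ m)⁻¹ := by
          rw [← Real.rpow_natCast Q m, ← Real.rpow_neg hQpos.le]
          norm_num [hm]
        have eU : (1 + ‖u‖) ^ (-((d:ℝ)+1)) = ((1 + ‖u‖) ^ (d+1))⁻¹ := by
          rw [← Real.rpow_natCast (1 + ‖u‖) (d+1), ← Real.rpow_neg hUnn.le]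
          norm_num
        have e2n : (2:ℝ) ^ (-(n:ℝ)) = ((2:ℝ) ^ n)⁻¹ := by
          rw [← Real.rpow_natCast 2 n, ← Real.rpow_neg (by norm_num)]
        set A : ℝ := (1 + ‖P‖)^(2*m) * ((2:ℝ)^(n*Nb) * (1 + ‖u‖)^Nb) with hAdef
        set Bq : ℝ := (2:ℝ)^n * (Q^m * (1 + ‖u‖)^(d+1)) with hBqdef
        have hApos : 0 < A := by positivity
        have hBqpos : 0 < Bq := by positivity
        have hUU : (1 + ‖u‖)^m * (1 + ‖u‖)^(d+1) = (1 + ‖u‖)^Nb := by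
          rw [← pow_add]; congr 1; omega
        have hpow2 : (2:ℝ)^(n*m) * 2^n ≤ (2:ℝ)^(n*Nb) := by
          rw [← pow_add]
          apply pow_le_pow_right₀ (by norm_num)
          have hnm : n*m + n = n*(m+1) := by ring
          rw [hnm]
          exact Nat.mul_le_mul_left n (by omega)
        have hfrac : Bq ≤ 10 ^ m * A := by
          calc Bq = 2^n * (Q^m * (1 + ‖u‖)^(d+1)) := hBqdef
            _ ≤ 2^n * (((1 + ‖P‖)^(2*m) * (10 ^ m * 2 ^ (n*m)) * (1 + ‖u‖)^m)
                  * (1 + ‖u‖)^(d+1)) := by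
                apply mul_le_mul_of_nonneg_left _ h2nn
                exact mul_le_mul_of_nonneg_right hkeym (by positivity)
            _ = 10 ^ m * ((2^(n*m) * 2^n) * ((1 + ‖P‖)^(2*m)
                  * ((1 + ‖u‖)^m * (1 + ‖u‖)^(d+1)))) := by ring
            _ = 10 ^ m * ((2^(n*m) * 2^n) * ((1 + ‖P‖)^(2*m) * (1 + ‖u‖)^Nb)) := by
                rw [hUU]
            _ ≤ 10 ^ m * ((2:ℝ)^(n*Nb) * ((1 + ‖P‖)^(2*m) * (1 + ‖u‖)^Nb)) := by
                have hx1 : (0:ℝ) < (1 + ‖P‖)^(2*m) * (1 + ‖u‖)^Nb := by positivity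
                have := mul_le_mul_of_nonneg_right hpow2 hx1.le
                have h10 : (0:ℝ) ≤ 10 ^ m := by positivity
                exact mul_le_mul_of_nonneg_left this h10
            _ = 10 ^ m * A := by rw [hAdef]; ring
        have hXY : A⁻¹ ≤ 10 ^ m * Bq⁻¹ := by
          rw [← one_div, ← div_eq_mul_inv]
          rw [div_le_div_iff₀ hApos hBqpos]
          linarith [hfrac]
        calc ‖ζ P‖ * ‖Etil u‖
            ≤ (K / (1 + ‖P‖)^(2*m)) * (D * ((2:ℝ) ^ (n*Nb))⁻¹ * ((1 + ‖u‖) ^ Nb)⁻¹) :=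
              mul_le_mul hζP hEu (norm_nonneg _) (by positivity)
          _ = (K * D) * A⁻¹ := by
              rw [hAdef, mul_inv, mul_inv, div_eq_mul_inv]; ring
          _ ≤ (K * D) * (10 ^ m * Bq⁻¹) :=
              mul_le_mul_of_nonneg_left hXY (mul_nonneg hKnn hDnn)
          _ = K * D * 10 ^ m * ((2:ℝ)^n)⁻¹ * ((Q^m)⁻¹ * (((1 + ‖u‖)^(d+1))⁻¹)) := by
              rw [hBqdef, mul_inv, mul_inv]; ring
          _ = K * D * 10 ^ m * (2:ℝ) ^ (-(n:ℝ)) * Q ^ (-((d:ℝ)+2)) * (1 + ‖u‖) ^ (-((d:ℝ)+1)) := by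
              rw [eQ, eU, e2n]; ring
      -- assemble the pointwise bound
      have hnorm : ‖ζ P * (((s ^ (-(d:ℝ)) : ℝ) : ℂ) * Etil u)‖
          = s ^ (-(d:ℝ)) * (‖ζ P‖ * ‖Etil u‖) := by
        rw [norm_mul, norm_mul, Complex.norm_real, Real.norm_eq_abs, abs_of_pos hsd]
        ring
      show ‖ζ P * (((s ^ (-(d:ℝ)) : ℝ) : ℂ) * Etil u)‖ ≤ (B * s ^ (-(d:ℝ))) * (1 + ‖u‖) ^ (-((d:ℝ)+1))
      rw [hnorm]
      calc s ^ (-(d:ℝ)) * (‖ζ P‖ * ‖Etil u‖)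
          ≤ s ^ (-(d:ℝ)) * (B * (1 + ‖u‖) ^ (-((d:ℝ)+1))) := by
            apply mul_le_mul_of_nonneg_left _ hsd.le
            rw [hBdef]
            exact hcore
        _ = (B * s ^ (-(d:ℝ))) * (1 + ‖u‖) ^ (-((d:ℝ)+1)) := by ring
    -- integrate the pointwise bound
    have hIg : ∫ y, g y = B * Ih := by
      rw [hgdef]
      simp only [integral_const_mul]
      rw [Measure.integral_comp_smul volume
        (fun u : EuclideanSpace ℝ (Fin d) => (1 + ‖u‖) ^ (-((d:ℝ)+1))) s⁻¹]
      rw [finrank_euclideanSpace_fin, smul_eq_mul, inv_pow, inv_inv, abs_of_pos (by positivity)]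
      rw [← hIhdef]
      have hsd' : s ^ (-(d:ℝ)) * s ^ d = 1 := by
        rw [← Real.rpow_natCast s d, ← Real.rpow_add hs0]
        norm_num
      calc B * s ^ (-(d:ℝ)) * (s ^ d * Ih) = B * (s ^ (-(d:ℝ)) * s ^ d) * Ih := by ring
        _ = B * Ih := by rw [hsd']; ring
    calc ‖∫ y : EuclideanSpace ℝ (Fin d),
            ζ (x - y, t - b * s) * (((s ^ (-(d:ℝ)) : ℝ) : ℂ) * Etil (s⁻¹ • y))‖
        ≤ ∫ y : EuclideanSpace ℝ (Fin d),
            ‖ζ (x - y, t - b * s) * (((s ^ (-(d:ℝ)) : ℝ) : ℂ) * Etil (s⁻¹ • y))‖ :=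
          norm_integral_le_integral_norm _
      _ ≤ ∫ y, g y :=
          integral_mono_of_nonneg (ae_of_all _ fun y => norm_nonneg _) hgint (ae_of_all _ hpt)
      _ = B * Ih := hIg
      _ = M := by rw [hMdef, hBdef]; ring
  -- outer integral
  have houter : ‖∫ s in Set.Ioo ((2:ℝ)^n) ((2:ℝ)^(n+1)),
      Γhat s • ∫ y : EuclideanSpace ℝ (Fin d),
        ζ (x - y, t - b * s) * (((s ^ (-(d:ℝ)) : ℝ) : ℂ) * Etil (s⁻¹ • y))‖ ≤
      (∫ s : ℝ, ‖Γhat s‖) * M := by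
    calc ‖∫ s in Set.Ioo ((2:ℝ)^n) ((2:ℝ)^(n+1)),
        Γhat s • ∫ y : EuclideanSpace ℝ (Fin d),
          ζ (x - y, t - b * s) * (((s ^ (-(d:ℝ)) : ℝ) : ℂ) * Etil (s⁻¹ • y))‖
        ≤ ∫ s in Set.Ioo ((2:ℝ)^n) ((2:ℝ)^(n+1)),
            ‖Γhat s • ∫ y : EuclideanSpace ℝ (Fin d),
              ζ (x - y, t - b * s) * (((s ^ (-(d:ℝ)) : ℝ) : ℂ) * Etil (s⁻¹ • y))‖ :=
          norm_integral_le_integral_norm _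
      _ ≤ ∫ s in Set.Ioo ((2:ℝ)^n) ((2:ℝ)^(n+1)), ‖Γhat s‖ * M := by
          apply integral_mono_of_nonneg (ae_of_all _ fun s => norm_nonneg _)
            (hΓ.norm.restrict.mul_const M)
          refine (ae_restrict_iff' measurableSet_Ioo).2 (ae_of_all _ fun s hs => ?_)
          simp only [norm_smul]
          exact mul_le_mul_of_nonneg_left (hA s hs) (norm_nonneg _)
      _ = (∫ s in Set.Ioo ((2:ℝ)^n) ((2:ℝ)^(n+1)), ‖Γhat s‖) * M := by
          rw [integral_mul_const]
      _ ≤ (∫ s : ℝ, ‖Γhat s‖) * M := by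
          apply mul_le_mul_of_nonneg_right _ hMnn
          exact setIntegral_le_integral hΓ.norm (ae_of_all _ fun s => norm_nonneg _)
  refine houter.trans ?_
  have hΓnn : 0 ≤ ∫ s : ℝ, ‖Γhat s‖ := integral_nonneg fun s => norm_nonneg _
  rw [hMdef]
  have hre : (∫ s : ℝ, ‖Γhat s‖) * (K * D * 10 ^ m * Ih * (2:ℝ) ^ (-(n:ℝ)) * Q ^ (-((d:ℝ)+2)))
      = (K * D * 10 ^ m * Ih) * (∫ s : ℝ, ‖Γhat s‖) * (2:ℝ) ^ (-(n:ℝ)) * Q ^ (-((d:ℝ)+2)) := by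
    ring
  rw [hre]
  have hfac : (0:ℝ) ≤ (∫ s : ℝ, ‖Γhat s‖) * (2:ℝ) ^ (-(n:ℝ)) * Q ^ (-((d:ℝ)+2)) :=
    mul_nonneg (mul_nonneg hΓnn (Real.rpow_nonneg (by norm_num) _))
      (Real.rpow_nonneg hQpos.le _)
  calc (K * D * 10 ^ m * Ih) * (∫ s : ℝ, ‖Γhat s‖) * (2:ℝ) ^ (-(n:ℝ)) * Q ^ (-((d:ℝ)+2))
      ≤ (K * D * 10 ^ m * Ih + 1) * (∫ s : ℝ, ‖Γhat s‖) * (2:ℝ) ^ (-(n:ℝ)) * Q ^ (-((d:ℝ)+2)) := by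
        have h1 : K * D * 10 ^ m * Ih ≤ K * D * 10 ^ m * Ih + 1 := by linarith
        calc (K * D * 10 ^ m * Ih) * (∫ s : ℝ, ‖Γhat s‖) * (2:ℝ) ^ (-(n:ℝ)) * Q ^ (-((d:ℝ)+2))
            = (K * D * 10 ^ m * Ih) * ((∫ s : ℝ, ‖Γhat s‖) * (2:ℝ) ^ (-(n:ℝ)) * Q ^ (-((d:ℝ)+2))) := by ring
          _ ≤ (K * D * 10 ^ m * Ih + 1) * ((∫ s : ℝ, ‖Γhat s‖) * (2:ℝ) ^ (-(n:ℝ)) * Q ^ (-((d:ℝ)+2))) :=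
              mul_le_mul_of_nonneg_right h1 hfac
          _ = (K * D * 10 ^ m * Ih + 1) * (∫ s : ℝ, ‖Γhat s‖) * (2:ℝ) ^ (-(n:ℝ)) * Q ^ (-((d:ℝ)+2)) := by ring
      _ = (K * D * 10 ^ m * Ih + 1) * (∫ s : ℝ, ‖Γhat s‖) * (2:ℝ) ^ (-(n:ℝ)) * Q ^ (-((d:ℝ)+2)) := rfl
end
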